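/- arXiv:2104.03554 — 3 statements merged into one kernel-verified Lean document; each statement's English description precedes it below -/
import Mathlib

section
/- Let n ≥ 1 be an integer, N an integer with 0 ≤ N ≤ n−1, and a₁,…,a_N ≥ 0 real numbers. Let U ⊂ ℂⁿ be the open unit polydisk, D = ⋃_{k=1}^N {z_k = 0}, and ψ(z) = log(|z_n|² ∏_{k=1}^N |z_k|^{2a_k}). For every admissible datum (g, g̃) one has lim_{t→−∞} ∫_{U ∩ {z : t < ψ(z) < t+1}} g̃(z) e^{−ψ(z)} dλ_{2n}(z) = π ∫_{ℂ^{n−1}} g(z′) ∏_{k=1}^N |z′_k|^{−2a_k} dλ_{2n−2}(z′). -/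
/-!
Write `z = (z', w)` with `w = z_n`, so that `ψ z = log (|w|² c z')` where
`c z' = ∏ |z'_k|^{2 a_k}`. For fixed `z'` with `c z' > 0` the band `{t < ψ < t + 1}` in the
`w`-plane is the annulus `e^{t/2} c^{-1/2} < |w| < e^{(t+1)/2} c^{-1/2}`, on which
`e^{-ψ} = 1 / (|w|² c)` has mass `2π · (1/2) / c = π / c`. As the annulus shrinks to `0`,
the `w`-integral of `g̃(z', ·) e^{-ψ}` tends to `π g̃(z', 0) / c z'`, and the same computation
bounds it by `π sup |g̃| / c z'`. Since the projection of `supp g̃` is compact and misses `D`,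
`c` is bounded below there, and dominated convergence in `z'` concludes.
-/

open MeasureTheory Filter Real Set Metric Topology

theorem integral_inv_norm_sq_annulus {r₁ r₂ : ℝ} (h₁ : 0 < r₁) (h₁₂ : r₁ ≤ r₂) :
    ∫ w : ℂ in norm ⁻¹' Ioo r₁ r₂, (‖w‖ ^ 2)⁻¹ = 2 * π * log (r₂ / r₁) := by
  have hball : volume.real (ball (0 : ℂ) 1) = π := by
    simp [measureReal_def, Complex.volume_ball]
  have hradial :
      ∫ y in Ioi (0 : ℝ), y ^ (2 - 1) • (Ioo r₁ r₂).indicator (fun y => (y ^ 2)⁻¹) y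
        = log (r₂ / r₁) := by
    have : EqOn (fun y : ℝ => y ^ (2 - 1) • (Ioo r₁ r₂).indicator (fun y => (y ^ 2)⁻¹) y)
        ((Ioo r₁ r₂).indicator fun y => y⁻¹) (Ioi 0) := by
      intro y hy
      by_cases hy' : y ∈ Ioo r₁ r₂
      · simp [hy', field]
      · simp [hy']
    rw [setIntegral_congr_fun measurableSet_Ioi this, integral_indicator measurableSet_Ioo,
      Measure.restrict_restrict measurableSet_Ioo,
      inter_eq_left.2 (Ioo_subset_Ioi_self.trans (Ioi_subset_Ioi h₁.le)),
      ← integral_Ioc_eq_integral_Ioo, ← intervalIntegral.integral_of_le h₁₂,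
      integral_inv_of_pos h₁ (h₁.trans_le h₁₂)]
  rw [← integral_indicator (measurableSet_Ioo.preimage continuous_norm.measurable)]
  have := integral_fun_norm_addHaar (volume : Measure ℂ)
    ((Ioo r₁ r₂).indicator fun y : ℝ => (y ^ 2)⁻¹)
  rw [Complex.finrank_real_complex, hball, hradial] at this
  refine this.trans ?_
  simp [mul_assoc]

-- The band `{t < ψ < t + 1}` in the `w`-plane over a fixed `z'`, with `c` standing for `c z'`.
def logBand (c t : ℝ) : Set ℂ := {w | log (‖w‖ ^ 2 * c) ∈ Ioo t (t + 1)}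

noncomputable def logBandIntegral (Q : Set ℂ) (c t : ℝ) (h : ℂ → ℝ) : ℝ :=
  ∫ w in Q ∩ logBand c t, h w * exp (-log (‖w‖ ^ 2 * c))

section LogBand

variable {c t : ℝ}

theorem measurableSet_logBand (c t : ℝ) : MeasurableSet (logBand c t) :=
  measurableSet_Ioo.preimage (by fun_prop)

-- `log 0 = 0` puts `w = 0` into the band when `-1 < t < 0`, hence `t ≤ -1`.
theorem logBand_eq_annulus (hc : 0 < c) (ht : t ≤ -1) :
    logBand c t = norm ⁻¹' Ioo (exp ((t - log c) / 2)) (exp ((t + 1 - log c) / 2)) := by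
  ext w
  rcases eq_or_ne w 0 with rfl | hw
  · simp only [logBand, norm_zero, mem_preimage, mem_Ioo]
    constructor
    · rintro ⟨-, h⟩
      rw [sq, norm_zero, zero_mul, zero_mul, log_zero] at h
      linarith
    · rintro ⟨h, -⟩; exact absurd h (exp_pos _).not_gt
  have hw' : 0 < ‖w‖ := norm_pos_iff.2 hw
  have hlog : log (‖w‖ ^ 2 * c) = 2 * log ‖w‖ + log c := by
    rw [log_mul (by positivity) hc.ne', log_pow]; push_cast; ring
  simp only [logBand, mem_preimage, mem_Ioo, ← lt_log_iff_exp_lt hw',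
    ← log_lt_iff_lt_exp hw']
  constructor <;> rintro ⟨h₁, h₂⟩ <;> constructor <;> linarith

theorem exp_neg_log_eq_inv_of_mem_logBand (hc : 0 < c) (ht : t ≤ -1) {w : ℂ}
    (hw : w ∈ logBand c t) : exp (-log (‖w‖ ^ 2 * c)) = (‖w‖ ^ 2 * c)⁻¹ := by
  rw [logBand_eq_annulus hc ht] at hw
  have : 0 < ‖w‖ := (exp_pos _).trans hw.1
  rw [exp_neg, exp_log (by positivity)]

theorem integral_logBand (hc : 0 < c) (ht : t ≤ -1) :
    ∫ w in logBand c t, exp (-log (‖w‖ ^ 2 * c)) = π / c := by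
  rw [setIntegral_congr_fun (measurableSet_logBand c t)
    fun w hw => exp_neg_log_eq_inv_of_mem_logBand hc ht hw]
  simp_rw [mul_inv]
  rw [integral_mul_const, logBand_eq_annulus hc ht,
    integral_inv_norm_sq_annulus (exp_pos _) (exp_le_exp.2 (by linarith)), ← exp_sub, log_exp]
  field_simp
  ring

-- A non-integrable function has integral `0`.
theorem integrableOn_logBand (hc : 0 < c) (ht : t ≤ -1) :
    IntegrableOn (fun w => exp (-log (‖w‖ ^ 2 * c))) (logBand c t) :=
  Integrable.of_integral_ne_zero <| by rw [integral_logBand hc ht]; positivity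

theorem abs_logBandIntegral_le (hc : 0 < c) (ht : t ≤ -1) {Q : Set ℂ} (hQ : MeasurableSet Q)
    {h : ℂ → ℝ} {M : ℝ} (hM : ∀ w ∈ logBand c t, |h w| ≤ M) :
    |logBandIntegral Q c t h| ≤ π * M / c := by
  have hB := measurableSet_logBand c t
  have hint : IntegrableOn (fun w => M * exp (-log (‖w‖ ^ 2 * c))) (logBand c t) :=
    (integrableOn_logBand hc ht).const_mul M
  rw [logBandIntegral, ← Real.norm_eq_abs]
  calc ‖∫ w in Q ∩ logBand c t, h w * exp (-log (‖w‖ ^ 2 * c))‖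
      ≤ ∫ w in Q ∩ logBand c t, M * exp (-log (‖w‖ ^ 2 * c)) := by
        refine norm_integral_le_of_norm_le (hint.mono_set inter_subset_right) ?_
        refine ae_restrict_of_forall_mem (hQ.inter hB) fun w hw => ?_
        rw [norm_mul, Real.norm_of_nonneg (exp_pos _).le, Real.norm_eq_abs]
        exact mul_le_mul_of_nonneg_right (hM w hw.2) (exp_pos _).le
    _ ≤ ∫ w in logBand c t, M * exp (-log (‖w‖ ^ 2 * c)) := by
        refine setIntegral_mono_set hint (ae_restrict_of_forall_mem hB fun w hw => ?_)
          inter_subset_right.eventuallyLE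
        exact mul_nonneg ((abs_nonneg _).trans (hM w hw)) (exp_pos _).le
    _ = π * M / c := by rw [integral_const_mul, integral_logBand hc ht]; ring

theorem eventually_logBand_subset (hc : 0 < c) {U : Set ℂ} (hU : U ∈ 𝓝 0) :
    ∀ᶠ t in atBot, logBand c t ⊆ U := by
  obtain ⟨r, hr, hrU⟩ := Metric.mem_nhds_iff.1 hU
  filter_upwards [eventually_le_atBot (min (-1) (2 * log r + log c - 1))] with t ht
  intro w hw
  rw [logBand_eq_annulus hc (ht.trans (min_le_left _ _))] at hw
  refine hrU (mem_ball_zero_iff.2 (hw.2.trans_le ?_))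
  calc exp ((t + 1 - log c) / 2) ≤ exp (log r) :=
        exp_le_exp.2 (by linarith [min_le_right (-1) (2 * log r + log c - 1)])
    _ = r := exp_log hr

theorem tendsto_logBandIntegral (hc : 0 < c) {Q : Set ℂ} (hQ : Q ∈ 𝓝 0) {h : ℂ → ℝ}
    (hh : Continuous h) :
    Tendsto (fun t => logBandIntegral Q c t h) atBot (𝓝 (π * h 0 / c)) := by
  refine Metric.tendsto_nhds.2 fun ε hε => ?_
  obtain ⟨δ, hδ, hδh⟩ :=
    Metric.continuousAt_iff.1 hh.continuousAt (ε * c / (2 * π)) (by positivity)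
  filter_upwards [eventually_logBand_subset hc (inter_mem hQ (ball_mem_nhds 0 hδ)),
    eventually_le_atBot (-1)] with t hsub ht
  have hnear : ∀ w ∈ logBand c t, |h w - h 0| ≤ ε * c / (2 * π) := fun w hw =>
    (hδh (hsub hw).2).le
  have hint : IntegrableOn (fun w => h w * exp (-log (‖w‖ ^ 2 * c))) (logBand c t) := by
    refine (integrableOn_logBand hc ht).bdd_mul hh.aestronglyMeasurable
      (c := |h 0| + ε * c / (2 * π))
      (ae_restrict_of_forall_mem (measurableSet_logBand c t) fun w hw => ?_)
    have := hnear w hw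
    rw [Real.norm_eq_abs]
    linarith [abs_sub_abs_le_abs_sub (h w) (h 0)]
  have hdiff : logBandIntegral Q c t h - π * h 0 / c
      = logBandIntegral univ c t (fun w => h w - h 0) := by
    simp only [logBandIntegral, univ_inter, inter_eq_right.2 (hsub.trans inter_subset_left),
      sub_mul]
    rw [integral_sub hint ((integrableOn_logBand hc ht).const_mul _), integral_const_mul,
      integral_logBand hc ht]
    ring
  rw [Real.dist_eq, hdiff]
  calc |logBandIntegral univ c t (fun w => h w - h 0)| ≤ π * (ε * c / (2 * π)) / c :=
        abs_logBandIntegral_le hc ht MeasurableSet.univ hnear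
    _ = ε / 2 := by field_simp
    _ < ε := half_lt_self hε

end LogBand

section Product

variable {X : Type*} {P : Set X} {Q : Set ℂ} {c : X → ℝ} {t : ℝ}

theorem measurableSet_logBand_fiber [MeasurableSpace X] (hc : Measurable c) :
    MeasurableSet {p : X × ℂ | p.2 ∈ logBand (c p.1) t} :=
  measurableSet_Ioo.preimage (by fun_prop)

theorem logBandIntegral_eq_setIntegral_indicator [MeasurableSpace X] (x : X)
    (f : X × ℂ → ℝ) :
    logBandIntegral Q (c x) t (fun w => f (x, w))
      = ∫ w in Q, {p : X × ℂ | p.2 ∈ logBand (c p.1) t}.indicator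
          (fun p => f p * exp (-log (‖p.2‖ ^ 2 * c p.1))) (x, w) :=
  (setIntegral_indicator (measurableSet_logBand (c x) t)).symm

variable [MeasurableSpace X] {μ : Measure X} [SFinite μ]

theorem stronglyMeasurable_logBandIntegral (hc : Measurable c) {f : X × ℂ → ℝ}
    (hf : StronglyMeasurable f) :
    StronglyMeasurable fun x => logBandIntegral Q (c x) t (fun w => f (x, w)) := by
  simp_rw [logBandIntegral_eq_setIntegral_indicator]
  refine StronglyMeasurable.integral_prod_right' (StronglyMeasurable.indicator ?_
    (measurableSet_logBand_fiber hc))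
  exact hf.mul (Measurable.stronglyMeasurable (by fun_prop))

theorem setIntegral_logBand_prod (hP : MeasurableSet P) (hc : Measurable c)
    {f : X × ℂ → ℝ} (hf : Integrable f (μ.prod volume)) :
    ∫ p in P ×ˢ Q ∩ {p | p.2 ∈ logBand (c p.1) t}, f p * exp (-log (‖p.2‖ ^ 2 * c p.1))
        ∂μ.prod volume
      = ∫ x in P, logBandIntegral Q (c x) t (fun w => f (x, w)) ∂μ := by
  set L := {p : X × ℂ | p.2 ∈ logBand (c p.1) t}
  have hL : MeasurableSet L := measurableSet_logBand_fiber hc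
  have hint : Integrable (L.indicator fun p => f p * exp (-log (‖p.2‖ ^ 2 * c p.1)))
      (μ.prod volume) := by
    refine (hf.norm.const_mul (exp (-t))).mono'
        ((hf.aestronglyMeasurable.mul (Measurable.aestronglyMeasurable (by fun_prop))).indicator hL)
      (ae_of_all _ fun p => ?_)
    by_cases hp : p ∈ L
    · rw [indicator_of_mem hp, norm_mul, Real.norm_of_nonneg (exp_pos _).le, mul_comm]
      exact mul_le_mul_of_nonneg_right (exp_le_exp.2 (neg_le_neg hp.1.le)) (norm_nonneg _)
    · rw [indicator_of_notMem hp, norm_zero]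
      positivity
  rw [← setIntegral_indicator hL, setIntegral_prod _ hint.integrableOn]
  exact setIntegral_congr_fun hP fun x _ => (logBandIntegral_eq_setIntegral_indicator x f).symm

theorem tendsto_setIntegral_logBand_prod [TopologicalSpace X] [OpensMeasurableSpace X]
    [T2Space X] [IsFiniteMeasureOnCompacts μ]
    (hP : MeasurableSet P) (hQ : MeasurableSet Q) (hQ0 : Q ∈ 𝓝 0) (hc : Measurable c)
    {f : X × ℂ → ℝ} (hf : Continuous f) (hfc : HasCompactSupport f)
    (hcf : ∀ p ∈ tsupport f, 0 < c p.1 ∧ ContinuousAt c p.1) :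
    Tendsto (fun t => ∫ p in P ×ˢ Q ∩ {p | p.2 ∈ logBand (c p.1) t},
        f p * exp (-log (‖p.2‖ ^ 2 * c p.1)) ∂μ.prod volume)
      atBot (𝓝 (π * ∫ x in P, f (x, 0) / c x ∂μ)) := by
  simp_rw [setIntegral_logBand_prod hP hc (hf.integrable_of_hasCompactSupport hfc),
    ← integral_const_mul, ← mul_div_assoc]
  set K := Prod.fst '' tsupport f
  have hK : IsCompact K := hfc.isCompact.image continuous_fst
  have hcK : ∀ x ∈ K, 0 < c x ∧ ContinuousAt c x := by
    rintro _ ⟨p, hp, rfl⟩; exact hcf p hp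
  have hfK : ∀ x ∉ K, ∀ w, f (x, w) = 0 := fun x hx w =>
    image_eq_zero_of_notMem_tsupport fun hxw => hx ⟨(x, w), hxw, rfl⟩
  have hslice : ∀ x ∉ K, ∀ t, logBandIntegral Q (c x) t (fun w => f (x, w)) = 0 :=
    fun x hx t => by simp [logBandIntegral, hfK x hx]
  obtain ⟨M, hM⟩ := hfc.exists_bound_of_continuous hf
  obtain ⟨C, hC⟩ := hK.exists_bound_of_continuousOn (f := fun x => (c x)⁻¹)
    fun x hx => ((hcK x hx).2.inv₀ (hcK x hx).1.ne').continuousWithinAt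
  refine tendsto_integral_filter_of_dominated_convergence (K.indicator fun _ => π * M * C)
    (Eventually.of_forall fun t => ?_) ?_ ?_ (ae_of_all _ fun x => ?_)
  · exact (stronglyMeasurable_logBandIntegral hc hf.measurable.stronglyMeasurable)
      |>.aestronglyMeasurable
  · filter_upwards [eventually_le_atBot (-1)] with t ht
    refine ae_of_all _ fun x => ?_
    by_cases hx : x ∈ K
    · have hCx : (c x)⁻¹ ≤ C := by simpa [abs_of_pos (hcK x hx).1] using hC x hx
      have hM0 : 0 ≤ M := (norm_nonneg _).trans (hM (x, 0))
      rw [indicator_of_mem hx, Real.norm_eq_abs]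
      calc |logBandIntegral Q (c x) t fun w => f (x, w)| ≤ π * M / c x :=
            abs_logBandIntegral_le (hcK x hx).1 ht hQ fun w _ => hM (x, w)
        _ ≤ π * M * C := by rw [div_eq_mul_inv]; gcongr
    · simp [hx, hslice x hx t]
  · exact (integrableOn_const hK.measure_lt_top.ne).integrable_indicator hK.measurableSet
  · by_cases hx : x ∈ K
    · exact tendsto_logBandIntegral (hcK x hx).1 hQ0 (hf.comp (Continuous.prodMk_right x))
    · rw [funext (hslice x hx), hfK x hx, mul_zero, zero_div]
      exact tendsto_const_nhds

end Product

def MeasurableEquiv.prodSnoc (α : Type*) [MeasurableSpace α] (m : ℕ) :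
    (Fin m → α) × α ≃ᵐ (Fin (m + 1) → α) :=
  MeasurableEquiv.prodComm.trans (MeasurableEquiv.piFinSuccAbove (fun _ => α) (Fin.last m)).symm

@[simp]
theorem MeasurableEquiv.prodSnoc_apply {α : Type*} [MeasurableSpace α] {m : ℕ}
    (p : (Fin m → α) × α) : MeasurableEquiv.prodSnoc α m p = Fin.snoc p.1 p.2 :=
  Fin.insertNth_last' _ _

theorem MeasurableEquiv.volume_preserving_prodSnoc (α : Type*) [MeasureSpace α]
    [SigmaFinite (volume : Measure α)] (m : ℕ) :
    MeasurePreserving (MeasurableEquiv.prodSnoc α m) :=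
  Measure.measurePreserving_swap.trans (volume_preserving_piFinSuccAbove _ _).symm

section ProdNormRpow

variable {ι κ : Type*} [Fintype κ] (σ : κ → ι) (a : κ → ℝ) {x : ι → ℂ}

theorem prod_norm_rpow_pos (hx : ∀ k, x (σ k) ≠ 0) : 0 < ∏ k, ‖x (σ k)‖ ^ a k :=
  Finset.prod_pos fun k _ => rpow_pos_of_pos (norm_pos_iff.2 (hx k)) _

theorem continuousAt_prod_norm_rpow (hx : ∀ k, x (σ k) ≠ 0) :
    ContinuousAt (fun x : ι → ℂ => ∏ k, ‖x (σ k)‖ ^ a k) x :=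
  tendsto_finsetProd _ fun k _ =>
    ((continuous_apply (σ k)).norm.continuousAt).rpow_const (Or.inl (norm_ne_zero_iff.2 (hx k)))

theorem prod_norm_rpow_neg :
    ∏ k, ‖x (σ k)‖ ^ (-a k) = (∏ k, ‖x (σ k)‖ ^ a k)⁻¹ := by
  rw [← Finset.prod_inv_distrib]
  exact Finset.prod_congr rfl fun k _ => rpow_neg (norm_nonneg _) _

end ProdNormRpow

theorem tendsto_setIntegral_polydisk_logBand {m : ℕ} {c : (Fin m → ℂ) → ℝ}
    (hc : Measurable c) {F : (Fin (m + 1) → ℂ) → ℝ} (hF : Continuous F)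
    (hFc : HasCompactSupport F)
    (hcF : ∀ z ∈ tsupport F, 0 < c (Fin.init z) ∧ ContinuousAt c (Fin.init z)) :
    Tendsto (fun t => ∫ z in {z | (∀ i, ‖z i‖ < 1) ∧
          t < log (‖z (Fin.last m)‖ ^ 2 * c (Fin.init z)) ∧
          log (‖z (Fin.last m)‖ ^ 2 * c (Fin.init z)) < t + 1},
        F z * exp (-log (‖z (Fin.last m)‖ ^ 2 * c (Fin.init z))))
      atBot (𝓝 (π * ∫ x in univ.pi fun _ => ball 0 1, F (Fin.snoc x 0) / c x)) := by
  obtain ⟨e, hemp, he_apply⟩ : ∃ e : (Fin m → ℂ) × ℂ ≃ᵐ (Fin (m + 1) → ℂ),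
      MeasurePreserving e ∧ ∀ p, e p = Fin.snoc p.1 p.2 :=
    ⟨_, MeasurableEquiv.volume_preserving_prodSnoc ℂ m, MeasurableEquiv.prodSnoc_apply⟩
  have he : Continuous e := by rw [funext he_apply]; fun_prop
  have hinit : ∀ p, Fin.init (e p) = p.1 := by simp [he_apply]
  have hlast : ∀ p, e p (Fin.last m) = p.2 := by simp [he_apply]
  have hFc' : HasCompactSupport (F ∘ e) := by
    refine HasCompactSupport.intro (hFc.image (f := fun z => (Fin.init z, z (Fin.last m)))
      (by fun_prop)) fun p hp => image_eq_zero_of_notMem_tsupport fun hp' =>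
        hp ⟨e p, tsupport_comp_subset_preimage F he hp', by simp [hinit, hlast]⟩
  have hlim := tendsto_setIntegral_logBand_prod (μ := volume) (P := univ.pi fun _ => ball 0 1)
    (c := c) (f := F ∘ e) (MeasurableSet.univ_pi fun _ => measurableSet_ball) measurableSet_ball
    (ball_mem_nhds 0 one_pos) hc (hF.comp he) hFc' fun p hp => by
      simpa only [hinit] using hcF _ (tsupport_comp_subset_preimage F he hp)
  convert hlim using 3 with t
  · rw [← hemp.setIntegral_preimage_emb e.measurableEmbedding, Measure.volume_eq_prod]
    congr 2
    · ext p
      simp [he_apply, logBand, Fin.forall_fin_succ', and_assoc]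
    · simp [hinit, hlast]
  · simp [he_apply]

/-- Lemma 3.4 of the paper: in the snc local model, the limit defining the
Ohsawa measure equals `π ∫ g ∏ |z'_k|^{-2 a_k}` for every admissible datum
`(g, g̃)`.  Here `ℂⁿ` is `Fin n → ℂ`, `Y = {z_n = 0}`, `D = ⋃_{k<N} {z_k = 0}`,
and `ψ z = log(|z_n|² ∏_{k<N} |z_k|^{2 a_k})`. -/
theorem ohsawa_measure_snc_model
    (n N : ℕ) (hn : 1 ≤ n) (hN : N ≤ n - 1)
    (a : Fin N → ℝ)
    (ψ : (Fin n → ℂ) → ℝ)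
    (hψ : ∀ z : Fin n → ℂ, ψ z =
      Real.log ((‖z ⟨n - 1, by omega⟩‖) ^ 2 *
        ∏ k : Fin N, ‖z (Fin.castLE (hN.trans (Nat.sub_le n 1)) k)‖ ^ (2 * a k)))
    -- the admissible datum (g, g̃) :
    (g : (Fin (n - 1) → ℂ) → ℝ) (gext : (Fin n → ℂ) → ℝ)
    (hgsub : tsupport g ⊆ {z' : Fin (n - 1) → ℂ |
      (∀ i, ‖z' i‖ < 1) ∧ ∀ k : Fin N, z' (Fin.castLE hN k) ≠ 0})
    (hgext : Continuous gext) (hgextsupp : HasCompactSupport gext)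
    (hgextD : ∀ z ∈ tsupport gext, ∀ k : Fin N,
      z (Fin.castLE (hN.trans (Nat.sub_le n 1)) k) ≠ 0)
    (hrestr : ∀ z' : Fin (n - 1) → ℂ, (∀ k : Fin N, z' (Fin.castLE hN k) ≠ 0) →
      gext (fun i : Fin n => if h : (i : ℕ) < n - 1 then z' ⟨i, h⟩ else 0) = g z') :
    Tendsto (fun t : ℝ =>
        ∫ z in {z : Fin n → ℂ | (∀ i, ‖z i‖ < 1) ∧
            t < ψ z ∧ ψ z < t + 1}, gext z * Real.exp (-ψ z))
      atBot
      (nhds (π * ∫ z' : Fin (n - 1) → ℂ,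
        g z' * ∏ k : Fin N, ‖z' (Fin.castLE hN k)‖ ^ (-(2 * a k)))) := by
  obtain ⟨m, rfl⟩ : ∃ m, n = m + 1 := ⟨n - 1, by omega⟩
  set c : (Fin m → ℂ) → ℝ := fun x => ∏ k, ‖x (Fin.castLE hN k)‖ ^ (2 * a k)
  have hψc : ψ = fun z => log (‖z (Fin.last m)‖ ^ 2 * c (Fin.init z)) := funext hψ
  have hsupp : ∀ z ∈ tsupport gext, ∀ k, Fin.init z (Fin.castLE hN k) ≠ 0 := hgextD
  have hg0 : ∀ x, ¬((∀ j, ‖x j‖ < 1) ∧ ∀ k, x (Fin.castLE hN k) ≠ 0) → g x = 0 :=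
    fun x hx => image_eq_zero_of_notMem_tsupport fun hx' => hx (hgsub hx')
  have hlimit : ∫ x in univ.pi fun _ => ball 0 1, gext (Fin.snoc x 0) / c x
      = ∫ x, g x * ∏ k, ‖x (Fin.castLE hN k)‖ ^ (-(2 * a k)) := by
    refine (setIntegral_congr_fun (MeasurableSet.univ_pi fun _ => measurableSet_ball)
      fun x _ => ?_).trans (setIntegral_eq_integral_of_forall_compl_eq_zero fun x hx => ?_)
    · rw [prod_norm_rpow_neg, div_eq_mul_inv]
      by_cases hD : ∀ k, x (Fin.castLE hN k) ≠ 0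
      · rw [← hrestr x hD]; rfl
      · have hz : Fin.snoc (α := fun _ => ℂ) x 0 ∉ tsupport gext := fun h =>
          hD fun k => by simpa using hsupp _ h k
        rw [hg0 x fun h => hD h.2, image_eq_zero_of_notMem_tsupport hz, zero_mul]
    · rw [hg0 x fun h => hx (by simpa using h.1), zero_mul]
  subst hψc
  rw [← hlimit]
  exact tendsto_setIntegral_polydisk_logBand (by fun_prop) hgext hgextsupp fun z hz =>
    ⟨prod_norm_rpow_pos _ _ (hsupp z hz), continuousAt_prod_norm_rpow _ _ (hsupp z hz)⟩
end

section
/- Let n ≥ 1 be an integer, δ ∈ (0,1), λ₁,…,λ_n ∈ ℝ, and c₁,…,c_n ≥ 0 real numbers with c_j > 0 for at least one j. Then ∫_{(0,δ)ⁿ} (∏_{i=1}^n r_i^{λ_i}) · (log(∏_{i=1}^n r_i^{c_i}))^{−2} dr₁⋯dr_n < +∞ if and only if the following three conditions hold: (a) λ_i ≥ −1 for every i; (b) whenever λ_i = −1 one has c_i > 0; and (c) there is at most one index i with λ_i = −1. -/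
/-!
With `t = exp (-u)`, a one-variable integral `∫₀^δ t ^ λ (c log t + L)⁻² dt` (`c ≥ 0 ≥ L`, not
both zero) becomes `∫ exp (-(λ + 1) u) (c u - L)⁻² du` over `(-log δ, ∞)`, which is finite iff
`λ > -1`, or `λ = -1` and `c > 0`.

Sufficiency: choose `i₀` with `c i₀ > 0` and `λₖ > -1` for `k ≠ i₀`. All terms of
`∑ cₖ log rₖ` are nonpositive, so `(∑ cₖ log rₖ)⁻² ≤ (c i₀ log r i₀)⁻²`, and the integrand is
dominated by a product of integrable functions of one variable.

Necessity: with all coordinates but `rᵢ` fixed in the cube, the integral in `rᵢ` is a positive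
multiple of a one-variable integral as above, infinite when (a) or (b) fails at `i`. If
`λᵢ = λⱼ = -1` with `i ≠ j`, the integral in `rⱼ` is a positive multiple of
`rᵢ⁻¹ (B - cᵢ log rᵢ)⁻¹` with `B ≥ 0`, and `∫₀^δ dt / (t (B - cᵢ log t))` diverges like
`∫^∞ du / u`.
-/

open MeasureTheory Real Set Filter Topology Function
open scoped ENNReal

section HalfLine

variable {a b c B : ℝ}

theorem integral_Ioi_inv_sq_linear (hc : 0 < c) (hcaB : 0 < c * a + B) :
    ∫ u in Ioi a, ((c * u + B) ^ 2)⁻¹ = (c * (c * a + B))⁻¹ := by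
  have hpos : ∀ u ∈ Ici a, 0 < c * u + B := fun u hu => by nlinarith [hu.out]
  have hderiv : ∀ u ∈ Ici a,
      HasDerivAt (fun u => -(c * (c * u + B))⁻¹) ((c * u + B) ^ 2)⁻¹ u := by
    intro u hu
    have hlin : HasDerivAt (fun u => c * (c * u + B)) (c * c) u := by
      simpa using ((hasDerivAt_id' u).const_mul c |>.add_const B).const_mul c
    have hne := (hpos u hu).ne'
    refine (hlin.inv (by positivity)).neg.congr_deriv ?_
    field_simp
  have hlim : Tendsto (fun u => -(c * (c * u + B))⁻¹) atTop (𝓝 0) := by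
    have : Tendsto (fun u => c * (c * u + B)) atTop atTop :=
      (tendsto_atTop_add_const_right _ B (tendsto_id.const_mul_atTop hc)).const_mul_atTop hc
    simpa using this.inv_tendsto_atTop.neg
  rw [integral_Ioi_of_hasDerivAt_of_nonneg' hderiv (fun u _ => by positivity) hlim]
  ring

theorem integrableOn_Ioi_inv_sq_linear (hc : 0 < c) (hcaB : 0 < c * a + B) :
    IntegrableOn (fun u => ((c * u + B) ^ 2)⁻¹) (Ioi a) :=
  .of_integral_ne_zero <| by rw [integral_Ioi_inv_sq_linear hc hcaB]; positivity

theorem not_integrableOn_Ioi_of_tendsto_atTop {f : ℝ → ℝ} (hf : Tendsto f atTop atTop) :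
    ¬ IntegrableOn f (Ioi a) := by
  intro hint
  obtain ⟨U, hU⟩ := eventually_atTop.1 (hf.eventually_ge_atTop 1)
  have hone : IntegrableOn (fun _ => (1 : ℝ)) (Ioi (max a U)) := by
    refine (hint.mono_set (Ioi_subset_Ioi (le_max_left a U))).mono' (by fun_prop) ?_
    refine (ae_restrict_iff' measurableSet_Ioi).2 (ae_of_all _ fun u hu => ?_)
    simpa using hU u ((le_max_right a U).trans hu.out.le)
  simp [integrableOn_const_iff] at hone

theorem not_integrableOn_Ioi_inv_linear (ha : 0 < a) (hc : 0 < c) (hB : 0 ≤ B) :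
    ¬ IntegrableOn (fun u => (c * u + B)⁻¹) (Ioi a) := by
  intro hint
  refine not_integrableOn_Ioi_inv (a := a) ((hint.const_mul (c + B / a)).mono' (by fun_prop) ?_)
  refine (ae_restrict_iff' measurableSet_Ioi).2 (ae_of_all _ fun u hu' => ?_)
  have hu : 0 < u := ha.trans hu'
  have hle : c * u + B ≤ (c + B / a) * u := by
    rw [add_mul, div_mul_eq_mul_div, add_le_add_iff_left, le_div_iff₀ ha]
    exact mul_le_mul_of_nonneg_left hu'.out.le hB
  rw [norm_inv, Real.norm_of_nonneg hu.le]
  calc u⁻¹ = (c + B / a) * ((c + B / a) * u)⁻¹ := by field_simp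
    _ ≤ (c + B / a) * (c * u + B)⁻¹ := by gcongr

theorem tendsto_exp_mul_inv_sq_linear_atTop (hb : 0 < b) (hc : 0 ≤ c) (hB : 0 ≤ B)
    (hcB : 0 < c + B) :
    Tendsto (fun u => exp (b * u) * ((c * u + B) ^ 2)⁻¹) atTop atTop := by
  refine tendsto_atTop_mono' atTop ?_
    ((tendsto_exp_mul_div_rpow_atTop 2 b hb).const_mul_atTop (inv_pos.2 (pow_pos hcB 2)))
  filter_upwards [eventually_ge_atTop 1] with u hu
  have hlin : 0 < c * u + B := by nlinarith
  have hle : c * u + B ≤ (c + B) * u := by nlinarith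
  calc ((c + B) ^ 2)⁻¹ * (exp (b * u) / u ^ (2 : ℝ))
      = exp (b * u) * (((c + B) * u) ^ 2)⁻¹ := by
        rw [rpow_two, mul_pow]; field_simp
    _ ≤ exp (b * u) * ((c * u + B) ^ 2)⁻¹ := by gcongr

theorem integrableOn_Ioi_exp_mul_inv_sq_linear_iff (ha : 0 < a) (hc : 0 ≤ c) (hB : 0 ≤ B)
    (hcB : 0 < c ∨ 0 < B) :
    IntegrableOn (fun u => exp (-b * u) * ((c * u + B) ^ 2)⁻¹) (Ioi a) ↔
      0 < b ∨ b = 0 ∧ 0 < c := by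
  have hcaB : 0 < c * a + B := by rcases hcB with h | h <;> nlinarith [mul_nonneg hc ha.le]
  rcases lt_trichotomy b 0 with hb | rfl | hb
  · simp only [hb.not_gt, hb.ne, false_and, or_false, iff_false]
    have hcB' : 0 < c + B := by rcases hcB with h | h <;> linarith
    exact not_integrableOn_Ioi_of_tendsto_atTop
      (tendsto_exp_mul_inv_sq_linear_atTop (neg_pos.2 hb) hc hB hcB')
  · simp only [neg_zero, zero_mul, exp_zero, one_mul, lt_irrefl, true_and, false_or]
    rcases hc.lt_or_eq with hc | rfl
    · exact iff_of_true (integrableOn_Ioi_inv_sq_linear hc hcaB) hc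
    · have hB : 0 < B := by simpa using hcaB
      simp [integrableOn_const_iff, hB.ne']
  · refine iff_of_true ?_ (Or.inl hb)
    refine (((exp_neg_integrableOn_Ioi a hb).const_mul ((c * a + B) ^ 2)⁻¹)).mono'
      (by fun_prop) ((ae_restrict_iff' measurableSet_Ioi).2 (ae_of_all _ fun u hu => ?_))
    have hle : c * a + B ≤ c * u + B := by nlinarith [hu.out]
    rw [norm_of_nonneg (by positivity), mul_comm]
    gcongr

end HalfLine

section Interval

variable {δ c L l B : ℝ}

theorem image_exp_neg_Ioi_neg_log (hδ : 0 < δ) :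
    (fun u => exp (-u)) '' Ioi (-log δ) = Ioo 0 δ := by
  rw [← exp_log hδ, ← image_exp_Iio, show (fun u => exp (-u)) = exp ∘ Neg.neg from rfl,
    image_comp, image_neg_Ioi, neg_neg, log_exp]

theorem hasDerivWithinAt_exp_neg (s : Set ℝ) (u : ℝ) :
    HasDerivWithinAt (fun u => exp (-u)) (-exp (-u)) s u := by
  simpa using ((hasDerivAt_neg u).exp).hasDerivWithinAt

theorem integrableOn_Ioo_zero_iff_comp_exp_neg (hδ : 0 < δ) (g : ℝ → ℝ) :
    IntegrableOn g (Ioo 0 δ) ↔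
      IntegrableOn (fun u => exp (-u) * g (exp (-u))) (Ioi (-log δ)) := by
  rw [← image_exp_neg_Ioi_neg_log hδ, integrableOn_image_iff_integrableOn_abs_deriv_smul
    measurableSet_Ioi (fun u _ => hasDerivWithinAt_exp_neg _ u)
    ((exp_injective.comp neg_injective).injOn)]
  simp [abs_of_pos (exp_pos _)]

theorem integral_Ioo_zero_eq_comp_exp_neg (hδ : 0 < δ) (g : ℝ → ℝ) :
    ∫ t in Ioo 0 δ, g t = ∫ u in Ioi (-log δ), exp (-u) * g (exp (-u)) := by
  rw [← image_exp_neg_Ioi_neg_log hδ, integral_image_eq_integral_abs_deriv_smul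
    measurableSet_Ioi (fun u _ => hasDerivWithinAt_exp_neg _ u)
    ((exp_injective.comp neg_injective).injOn)]
  simp [abs_of_pos (exp_pos _)]

theorem exp_neg_mul_rpow_mul_inv_sq_log (u : ℝ) :
    exp (-u) * (exp (-u) ^ l * ((c * log (exp (-u)) + L) ^ 2)⁻¹) =
      exp (-(l + 1) * u) * ((c * u + -L) ^ 2)⁻¹ := by
  rw [log_exp, ← exp_mul, ← mul_assoc, ← exp_add]
  ring_nf

theorem integrableOn_Ioo_rpow_mul_inv_sq_log_iff (hδ0 : 0 < δ) (hδ1 : δ < 1) (hc : 0 ≤ c)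
    (hL : L ≤ 0) (hcL : 0 < c ∨ L < 0) :
    IntegrableOn (fun t => t ^ l * ((c * log t + L) ^ 2)⁻¹) (Ioo 0 δ) ↔
      -1 < l ∨ l = -1 ∧ 0 < c := by
  rw [integrableOn_Ioo_zero_iff_comp_exp_neg hδ0]
  simp_rw [exp_neg_mul_rpow_mul_inv_sq_log]
  rw [integrableOn_Ioi_exp_mul_inv_sq_linear_iff (neg_pos.2 (log_neg hδ0 hδ1)) hc
    (neg_nonneg.2 hL) (hcL.imp_right neg_pos.2)]
  constructor <;> rintro (h | ⟨h, hc⟩) <;> first | left; linarith | right; exact ⟨by linarith, hc⟩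

theorem integral_Ioo_rpow_neg_one_mul_inv_sq_log (hδ0 : 0 < δ) (hδ1 : δ < 1) (hc : 0 < c)
    (hL : L ≤ 0) :
    ∫ t in Ioo 0 δ, t ^ (-1 : ℝ) * ((c * log t + L) ^ 2)⁻¹ = (c * (c * -log δ + -L))⁻¹ := by
  rw [integral_Ioo_zero_eq_comp_exp_neg hδ0]
  simp_rw [exp_neg_mul_rpow_mul_inv_sq_log]
  simp only [neg_add_cancel, neg_zero, zero_mul, exp_zero, one_mul]
  exact integral_Ioi_inv_sq_linear hc (by nlinarith [log_neg hδ0 hδ1])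

theorem not_integrableOn_Ioo_rpow_neg_one_mul_inv_log (hδ0 : 0 < δ) (hδ1 : δ < 1) (hc : 0 < c)
    (hB : 0 ≤ B) :
    ¬ IntegrableOn (fun t => t ^ (-1 : ℝ) * (B - c * log t)⁻¹) (Ioo 0 δ) := by
  rw [integrableOn_Ioo_zero_iff_comp_exp_neg hδ0]
  convert not_integrableOn_Ioi_inv_linear (neg_pos.2 (log_neg hδ0 hδ1)) hc hB using 3 with u
  rw [log_exp, ← exp_mul, ← mul_assoc, ← exp_add]
  ring_nf
  simp

end Interval

theorem lintegral_ofReal_eq_top_of_not_integrableOn {α : Type*} [MeasurableSpace α] {μ : Measure α}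
    {f : α → ℝ} {s : Set α} (hs : MeasurableSet s) (hf : AEStronglyMeasurable f (μ.restrict s))
    (hnn : ∀ x ∈ s, 0 ≤ f x) (h : ¬ IntegrableOn f s μ) :
    ∫⁻ x in s, ENNReal.ofReal (f x) ∂μ = ⊤ :=
  not_ne_iff.1 fun hne =>
    h ((lintegral_ofReal_ne_top_iff_integrable hf (ae_restrict_of_forall_mem hs hnn)).1 hne)

section ProductMeasure

variable {ι : Type*} [Fintype ι]

theorem lintegral_pi_eq_top_of_lmarginal_eq_top [DecidableEq ι] {X : ι → Type*}
    [∀ i, MeasurableSpace (X i)] {μ : ∀ i, Measure (X i)} [∀ i, SigmaFinite (μ i)]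
    {F : (∀ i, X i) → ℝ≥0∞} (hF : Measurable F) (s : Finset ι) {A : ∀ i, Set (X i)} (hA : ∀ i, MeasurableSet (A i))
    (hA0 : ∀ i, μ i (A i) ≠ 0) (htop : ∀ x, (∀ i ∉ s, x i ∈ A i) → (∫⋯∫⁻_s, F ∂μ) x = ⊤) :
    ∫⁻ x, F x ∂Measure.pi μ = ⊤ := by
  have hbox : MeasurableSet (univ.pi A) := .univ_pi hA
  refine top_le_iff.1 ?_
  calc ⊤ = ∫⁻ x, (univ.pi A).indicator (fun _ => ⊤) x ∂Measure.pi μ := by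
        rw [lintegral_indicator_const hbox, Measure.pi_pi,
          ENNReal.top_mul (Finset.prod_ne_zero_iff.2 fun i _ => hA0 i)]
    _ ≤ ∫⁻ x, F x ∂Measure.pi μ :=
        lintegral_le_of_lmarginal_le s (measurable_const.indicator hbox) hF fun x => ?_
  by_cases hx : ∀ i ∉ s, x i ∈ A i
  · rw [htop x hx]
    exact le_top
  · obtain ⟨i, hi, hxi⟩ : ∃ i ∉ s, x i ∉ A i := by simpa using hx
    have hout : ∀ y, updateFinset x s y ∉ univ.pi A := fun y hy =>
      hxi (by simpa [updateFinset, hi] using hy i (Set.mem_univ i))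
    simp [lmarginal, indicator_of_notMem (hout _)]

theorem integrableOn_univ_pi_of_norm_le_prod {X : Type*} [MeasurableSpace X] {μ : ι → Measure X}
    [∀ i, SigmaFinite (μ i)] {E : Type*} [NormedAddCommGroup E] {s : ι → Set X}
    (hs : ∀ i, MeasurableSet (s i)) {f : (ι → X) → E} {b : ι → X → ℝ}
    (hb : ∀ i, IntegrableOn (b i) (s i) (μ i))
    (hf : AEStronglyMeasurable f ((Measure.pi μ).restrict (univ.pi s)))
    (hfb : ∀ x ∈ univ.pi s, ‖f x‖ ≤ ∏ i, b i (x i)) :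
    IntegrableOn f (univ.pi s) (Measure.pi μ) := by
  have hbound : ∀ᵐ x ∂(Measure.pi μ).restrict (univ.pi s), ‖f x‖ ≤ ∏ i, b i (x i) :=
    ae_restrict_of_forall_mem (.univ_pi hs) hfb
  rw [IntegrableOn, Measure.restrict_pi_pi] at *
  exact (Integrable.fintype_prod hb).mono' hf hbound

end ProductMeasure

@[to_additive]
theorem prod_apply_update_of_mem {ι α M : Type*} [DecidableEq ι] [CommMonoid M] {s : Finset ι}
    {i : ι} (hi : i ∈ s) (φ : ι → α → M) (x : ι → α) (t : α) :
    ∏ k ∈ s, φ k (update x i t k) = φ i t * ∏ k ∈ s.erase i, φ k (x k) := by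
  rw [← Finset.mul_prod_erase s _ hi, update_self]
  congr 1
  exact Finset.prod_congr rfl fun k hk => by rw [update_of_ne (Finset.ne_of_mem_erase hk)]

section Cube

variable {ι : Type*} {δ : ℝ}

def openCube (ι : Type*) (δ : ℝ) : Set (ι → ℝ) := univ.pi fun _ => Ioo 0 δ

theorem measurableSet_openCube [Countable ι] : MeasurableSet (openCube ι δ) :=
  .univ_pi fun _ => measurableSet_Ioo

theorem indicator_openCube_update [DecidableEq ι] {x : ι → ℝ} {i : ι}
    (hx : ∀ k ≠ i, x k ∈ Ioo 0 δ) {M : Type*} [Zero M] (g : (ι → ℝ) → M) (t : ℝ) :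
    (openCube ι δ).indicator g (update x i t) =
      (Ioo 0 δ).indicator (fun t => g (update x i t)) t := by
  classical
  have hx' : x ∈ (univ \ {i} : Set ι).pi fun _ => Ioo 0 δ := fun k hk => hx k hk.2
  rw [openCube, indicator_apply, indicator_apply, update_mem_pi_iff, and_iff_right hx']
  simp only [Set.mem_univ, forall_const]

theorem mul_log_nonpos_of_nonneg {a x : ℝ} (ha : 0 ≤ a) (hx : x ∈ Ioo 0 1) : a * log x ≤ 0 :=
  mul_nonpos_of_nonneg_of_nonpos ha (log_nonpos hx.1.le hx.2.le)

theorem sum_mul_log_neg {c x : ι → ℝ} {s : Finset ι} (hc : ∀ k ∈ s, 0 ≤ c k)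
    (hx : ∀ k ∈ s, x k ∈ Ioo 0 1) {j : ι} (hj : j ∈ s) (hcj : 0 < c j) :
    ∑ k ∈ s, c k * log (x k) < 0 :=
  Finset.sum_neg' (fun k hk => mul_log_nonpos_of_nonneg (hc k hk) (hx k hk))
    ⟨j, hj, mul_neg_of_pos_of_neg hcj (log_neg (hx j hj).1 (hx j hj).2)⟩

end Cube

section LogWeight

variable {ι : Type*} [Fintype ι] {lam c : ι → ℝ} {δ : ℝ}

variable (lam c) in
noncomputable def logWeight (r : ι → ℝ) : ℝ :=
  (∏ i, r i ^ lam i) * ((log (∏ i, r i ^ c i)) ^ 2)⁻¹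

theorem measurable_logWeight : Measurable (logWeight lam c) := by
  unfold logWeight
  fun_prop

theorem log_prod_rpow {r : ι → ℝ} (hr : ∀ i, 0 < r i) :
    log (∏ i, r i ^ c i) = ∑ i, c i * log (r i) := by
  rw [log_prod fun i _ => (rpow_pos_of_pos (hr i) _).ne']
  exact Finset.sum_congr rfl fun i _ => log_rpow (hr i) _

theorem logWeight_update [DecidableEq ι] {x : ι → ℝ} {i : ι} (hx : ∀ k ≠ i, 0 < x k) {t : ℝ}
    (ht : 0 < t) :
    logWeight lam c (update x i t) = (∏ k ∈ Finset.univ.erase i, x k ^ lam k) *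
      (t ^ lam i * ((c i * log t + ∑ k ∈ Finset.univ.erase i, c k * log (x k)) ^ 2)⁻¹) := by
  have hpos : ∀ k, 0 < update x i t k := fun k => by
    rcases eq_or_ne k i with rfl | hk
    · simpa using ht
    · simpa [hk] using hx k hk
  rw [logWeight, log_prod_rpow hpos,
    prod_apply_update_of_mem (Finset.mem_univ i) (fun k s => s ^ lam k),
    sum_apply_update_of_mem (Finset.mem_univ i) (fun k s => c k * log s)]
  ring

theorem lintegral_indicator_logWeight_update [DecidableEq ι] {x : ι → ℝ} {i : ι}
    (hx : ∀ k ≠ i, x k ∈ Ioo 0 δ) :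
    ∫⁻ t, (openCube ι δ).indicator (fun r => ENNReal.ofReal (logWeight lam c r)) (update x i t) =
      ENNReal.ofReal (∏ k ∈ Finset.univ.erase i, x k ^ lam k) * ∫⁻ t in Ioo 0 δ, ENNReal.ofReal
        (t ^ lam i * ((c i * log t + ∑ k ∈ Finset.univ.erase i, c k * log (x k)) ^ 2)⁻¹) := by
  simp_rw [indicator_openCube_update hx]
  rw [lintegral_indicator measurableSet_Ioo, ← lintegral_const_mul' _ _ ENNReal.ofReal_ne_top]
  refine setLIntegral_congr_fun measurableSet_Ioo fun t ht => ?_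
  rw [logWeight_update (fun k hk => (hx k hk).1) ht.1, ENNReal.ofReal_mul
    (Finset.prod_nonneg fun k hk => rpow_nonneg (hx k (Finset.ne_of_mem_erase hk)).1.le _)]

theorem lintegral_indicator_logWeight_lt_top (hf : IntegrableOn (logWeight lam c) (openCube ι δ)) :
    ∫⁻ x, (openCube ι δ).indicator (fun r => ENNReal.ofReal (logWeight lam c r)) x
      < ⊤ := by
  rw [lintegral_indicator measurableSet_openCube]
  exact hf.lintegral_lt_top

theorem neg_one_lt_or_eq_of_integrableOn_logWeight (hδ0 : 0 < δ) (hδ1 : δ < 1) (hc : ∀ i, 0 ≤ c i)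
    (hcpos : ∃ j, 0 < c j) (hf : IntegrableOn (logWeight lam c) (openCube ι δ)) (i : ι) :
    -1 < lam i ∨ lam i = -1 ∧ 0 < c i := by
  classical
  by_contra hbad
  refine (lintegral_indicator_logWeight_lt_top hf).ne (lintegral_pi_eq_top_of_lmarginal_eq_top
    (μ := fun _ => volume) ((measurable_logWeight.ennreal_ofReal).indicator measurableSet_openCube)
    {i} (A := fun _ => Ioo 0 δ) (fun _ => measurableSet_Ioo) (fun _ => by simp [hδ0])
    fun x hx => ?_)
  have hx' : ∀ k ≠ i, x k ∈ Ioo 0 δ := fun k hk => hx k (by simpa using hk)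
  have hx1 : ∀ k ∈ Finset.univ.erase i, x k ∈ Ioo 0 1 := fun k hk =>
    Ioo_subset_Ioo_right hδ1.le (hx' k (Finset.ne_of_mem_erase hk))
  have hL : ∑ k ∈ Finset.univ.erase i, c k * log (x k) ≤ 0 :=
    Finset.sum_nonpos fun k hk => mul_log_nonpos_of_nonneg (hc k) (hx1 k hk)
  have hcL : 0 < c i ∨ ∑ k ∈ Finset.univ.erase i, c k * log (x k) < 0 := by
    refine or_iff_not_imp_left.2 fun hci => ?_
    obtain ⟨j, hcj⟩ := hcpos
    exact sum_mul_log_neg (fun k _ => hc k) hx1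
      (Finset.mem_erase.2 ⟨fun hji => hci (hji ▸ hcj), Finset.mem_univ j⟩) hcj
  rw [lmarginal_singleton]
  dsimp only
  rw [lintegral_indicator_logWeight_update hx',
    lintegral_ofReal_eq_top_of_not_integrableOn measurableSet_Ioo (by fun_prop)
      (fun t ht => mul_nonneg (rpow_nonneg ht.1.le _) (by positivity))
      (by rwa [integrableOn_Ioo_rpow_mul_inv_sq_log_iff hδ0 hδ1 (hc i) hL hcL]),
    ENNReal.mul_top]
  exact ENNReal.ofReal_pos.2 (Finset.prod_pos fun k hk => rpow_pos_of_pos (hx1 k hk).1 _) |>.ne'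

theorem lintegral_indicator_logWeight_update_update [DecidableEq ι] (hδ0 : 0 < δ)
    (hδ1 : δ < 1) (hc : ∀ i, 0 ≤ c i) {i j : ι} (hij : i ≠ j) (hj : lam j = -1) (hcj : 0 < c j)
    {x : ι → ℝ} (hx : ∀ k ∉ ({i, j} : Finset ι), x k ∈ Ioo 0 δ) {t : ℝ} (ht : t ∈ Ioo 0 δ) :
    ∫⁻ u, (openCube ι δ).indicator (fun r => ENNReal.ofReal (logWeight lam c r))
        (update (update x i t) j u) =
      ENNReal.ofReal ((∏ k ∈ (Finset.univ.erase j).erase i, x k ^ lam k) / c j *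
        (t ^ lam i * (c j * -log δ - ∑ k ∈ (Finset.univ.erase j).erase i, c k * log (x k) -
          c i * log t)⁻¹)) := by
  have hi_mem : i ∈ Finset.univ.erase j := Finset.mem_erase.2 ⟨hij, Finset.mem_univ i⟩
  have hx1 : ∀ k ∈ (Finset.univ.erase j).erase i, x k ∈ Ioo 0 1 := fun k hk =>
    Ioo_subset_Ioo_right hδ1.le (hx k (by simp_all))
  have hy : ∀ k ≠ j, update x i t k ∈ Ioo 0 δ := fun k hk => by
    rcases eq_or_ne k i with rfl | hki
    · simpa using ht
    · simpa [hki] using hx k (by simp [hki, hk])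
  set L := ∑ k ∈ (Finset.univ.erase j).erase i, c k * log (x k)
  set P := ∏ k ∈ (Finset.univ.erase j).erase i, x k ^ lam k
  have hP : 0 < P := Finset.prod_pos fun k hk => rpow_pos_of_pos (hx1 k hk).1 _
  have hM : c i * log t + L ≤ 0 := add_nonpos
    (mul_log_nonpos_of_nonneg (hc i) (Ioo_subset_Ioo_right hδ1.le ht))
    (Finset.sum_nonpos fun k hk => mul_log_nonpos_of_nonneg (hc k) (hx1 k hk))
  have hint := (integrableOn_Ioo_rpow_mul_inv_sq_log_iff (l := -1) hδ0 hδ1 hcj.le hM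
    (Or.inl hcj)).2 (Or.inr ⟨rfl, hcj⟩)
  rw [lintegral_indicator_logWeight_update hy,
    prod_apply_update_of_mem hi_mem (fun k s => s ^ lam k),
    sum_apply_update_of_mem hi_mem (fun k s => c k * log s), hj,
    ← ofReal_integral_eq_lintegral_ofReal hint ((ae_restrict_iff' measurableSet_Ioo).2
      (ae_of_all _ fun u hu => mul_nonneg (rpow_nonneg hu.1.le _) (by positivity))),
    integral_Ioo_rpow_neg_one_mul_inv_sq_log hδ0 hδ1 hcj hM,
    ← ENNReal.ofReal_mul (mul_nonneg (rpow_nonneg ht.1.le _) hP.le)]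
  congr 1
  field_simp
  ring

theorem eq_of_integrableOn_logWeight_of_eq_neg_one [DecidableEq ι] (hδ0 : 0 < δ) (hδ1 : δ < 1)
    (hc : ∀ i, 0 ≤ c i) (hf : IntegrableOn (logWeight lam c) (openCube ι δ)) {i j : ι}
    (hi : lam i = -1) (hj : lam j = -1) (hci : 0 < c i) (hcj : 0 < c j) : i = j := by
  by_contra hij
  set F := (openCube ι δ).indicator fun r => ENNReal.ofReal (logWeight lam c r)
  have hF : Measurable F := (measurable_logWeight.ennreal_ofReal).indicator measurableSet_openCube
  refine (lintegral_indicator_logWeight_lt_top hf).ne (lintegral_pi_eq_top_of_lmarginal_eq_top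
    (μ := fun _ => volume) hF {i, j} (A := fun _ => Ioo 0 δ) (fun _ => measurableSet_Ioo)
    (fun _ => by simp [hδ0]) fun x hx => ?_)
  set L := ∑ k ∈ (Finset.univ.erase j).erase i, c k * log (x k)
  set P := ∏ k ∈ (Finset.univ.erase j).erase i, x k ^ lam k
  have hx1 : ∀ k ∈ (Finset.univ.erase j).erase i, x k ∈ Ioo 0 1 := fun k hk =>
    Ioo_subset_Ioo_right hδ1.le (hx k (by simp_all))
  have hP : 0 < P := Finset.prod_pos fun k hk => rpow_pos_of_pos (hx1 k hk).1 _
  have hB : 0 ≤ c j * -log δ - L := sub_nonneg.2 <| (Finset.sum_nonpos fun k hk =>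
    mul_log_nonpos_of_nonneg (hc k) (hx1 k hk)).trans (by nlinarith [log_neg hδ0 hδ1])
  have hnn : ∀ t ∈ Ioo 0 δ, 0 ≤ t ^ (-1 : ℝ) * (c j * -log δ - L - c i * log t)⁻¹ :=
    fun t ht => mul_nonneg (rpow_nonneg ht.1.le _) <| inv_nonneg.2 <| sub_nonneg_of_le <|
      hB.trans' (mul_log_nonpos_of_nonneg hci.le (Ioo_subset_Ioo_right hδ1.le ht))
  refine eq_top_iff.2 <| calc
    ⊤ = ∫⁻ t in Ioo 0 δ, ENNReal.ofReal (P / c j) *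
        ENNReal.ofReal (t ^ (-1 : ℝ) * (c j * -log δ - L - c i * log t)⁻¹) := by
      rw [lintegral_const_mul' _ _ ENNReal.ofReal_ne_top,
        lintegral_ofReal_eq_top_of_not_integrableOn measurableSet_Ioo (by fun_prop) hnn
          (not_integrableOn_Ioo_rpow_neg_one_mul_inv_log hδ0 hδ1 hci hB),
        ENNReal.mul_top (by simpa using div_pos hP hcj)]
    _ = ∫⁻ t in Ioo 0 δ, ∫⁻ u, F (update (update x i t) j u) :=
      setLIntegral_congr_fun measurableSet_Ioo fun t ht => by
        rw [lintegral_indicator_logWeight_update_update hδ0 hδ1 hc hij hj hcj hx ht, hi,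
          ENNReal.ofReal_mul (div_pos hP hcj).le]
    _ ≤ ∫⁻ t, ∫⁻ u, F (update (update x i t) j u) := setLIntegral_le_lintegral _ _
    _ = (∫⋯∫⁻_{i, j}, F ∂fun _ => volume) x := by
      rw [lmarginal_insert _ hF (by simpa using hij)]
      simp [lmarginal_singleton]

theorem integrableOn_logWeight (hδ0 : 0 < δ) (hδ1 : δ < 1) (hc : ∀ i, 0 ≤ c i) {i₀ : ι}
    (hci₀ : 0 < c i₀) (hlam₀ : -1 ≤ lam i₀) (hlam : ∀ k ≠ i₀, -1 < lam k) :
    IntegrableOn (logWeight lam c) (openCube ι δ) := by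
  classical
  refine integrableOn_univ_pi_of_norm_le_prod (fun _ => measurableSet_Ioo)
    (b := fun k t => t ^ lam k * if k = i₀ then ((c i₀ * log t) ^ 2)⁻¹ else 1) (fun k => ?_)
    measurable_logWeight.aestronglyMeasurable fun r hr => ?_
  · by_cases hk : k = i₀
    · subst hk
      simpa using (integrableOn_Ioo_rpow_mul_inv_sq_log_iff hδ0 hδ1 hci₀.le le_rfl
        (Or.inl hci₀)).2 (hlam₀.lt_or_eq.imp_right fun h => ⟨h.symm, hci₀⟩)
    · simpa [hk] using (intervalIntegral.integrableOn_Ioo_rpow_iff hδ0).2 (hlam k hk)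
  have hr1 : ∀ k, r k ∈ Ioo 0 1 := fun k => Ioo_subset_Ioo_right hδ1.le (hr k (Set.mem_univ k))
  have hterm : c i₀ * log (r i₀) < 0 := mul_neg_of_pos_of_neg hci₀ (log_neg (hr1 i₀).1 (hr1 i₀).2)
  have hsum : ∑ k, c k * log (r k) ≤ c i₀ * log (r i₀) := by
    rw [← Finset.add_sum_erase _ _ (Finset.mem_univ i₀), add_le_iff_nonpos_right]
    exact Finset.sum_nonpos fun k _ => mul_log_nonpos_of_nonneg (hc k) (hr1 k)
  have hprod : 0 ≤ ∏ k, r k ^ lam k := Finset.prod_nonneg fun k _ => rpow_nonneg (hr1 k).1.le _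
  rw [Finset.prod_mul_distrib, Finset.prod_ite_eq', if_pos (Finset.mem_univ _), Real.norm_eq_abs,
    logWeight, log_prod_rpow fun k => (hr1 k).1, abs_of_nonneg (by positivity)]
  exact mul_le_mul_of_nonneg_left (inv_anti₀ (sq_pos_of_neg hterm) (by nlinarith)) hprod

end LogWeight

theorem log_weighted_monomial_integrability_criterion_general
    (n : ℕ) (δ : ℝ) (hδ0 : 0 < δ) (hδ1 : δ < 1)
    (lam c : Fin n → ℝ) (hc : ∀ i, 0 ≤ c i) (hcpos : ∃ j, 0 < c j) :
    IntegrableOn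
      (fun r : Fin n → ℝ =>
        (∏ i, r i ^ lam i) * ((Real.log (∏ i, r i ^ c i)) ^ 2)⁻¹)
      (Set.univ.pi fun _ : Fin n => Set.Ioo (0 : ℝ) δ) volume
    ↔ ((∀ i, -1 ≤ lam i) ∧ (∀ i, lam i = -1 → 0 < c i) ∧
        ∀ i j, lam i = -1 → lam j = -1 → i = j) := by
  change IntegrableOn (logWeight lam c) (openCube (Fin n) δ) ↔ _
  constructor
  · intro hf
    have hcond := neg_one_lt_or_eq_of_integrableOn_logWeight hδ0 hδ1 hc hcpos hf
    have hpos : ∀ i, lam i = -1 → 0 < c i := fun i hi =>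
      ((hcond i).resolve_left hi.not_gt).2
    refine ⟨fun i => ?_, hpos, fun i j hi hj => ?_⟩
    · rcases hcond i with h | ⟨h, -⟩ <;> linarith
    · exact eq_of_integrableOn_logWeight_of_eq_neg_one hδ0 hδ1 hc hf hi hj (hpos i hi) (hpos j hj)
  · rintro ⟨hge, hpos, huniq⟩
    by_cases h : ∃ i₀, lam i₀ = -1
    · obtain ⟨i₀, hi₀⟩ := h
      exact integrableOn_logWeight hδ0 hδ1 hc (hpos i₀ hi₀) (hge i₀) fun k hk =>
        (hge k).lt_of_ne fun hk' => hk (huniq k i₀ hk'.symm hi₀)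
    · obtain ⟨j, hj⟩ := hcpos
      exact integrableOn_logWeight hδ0 hδ1 hc hj (hge j) fun k _ =>
        (hge k).lt_of_ne fun hk => h ⟨k, hk.symm⟩

/-- The real integrability criterion underlying the proof of Proposition 5.3 of
the paper: for `δ ∈ (0,1)`, `λᵢ ∈ ℝ` and `cᵢ ≥ 0` with some `c_j > 0`, the
integral `∫_{(0,δ)ⁿ} (∏ rᵢ^{λᵢ}) (log ∏ rᵢ^{cᵢ})^{-2} dr` is finite iff
(a) every `λᵢ ≥ -1`, (b) `λᵢ = -1` forces `cᵢ > 0`, and (c) at most one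
index has `λᵢ = -1`. -/
theorem log_weighted_monomial_integrability_criterion
    (n : ℕ) (hn : 1 ≤ n) (δ : ℝ) (hδ0 : 0 < δ) (hδ1 : δ < 1)
    (lam c : Fin n → ℝ) (hc : ∀ i, 0 ≤ c i) (hcpos : ∃ j, 0 < c j) :
    IntegrableOn
      (fun r : Fin n → ℝ =>
        (∏ i, r i ^ lam i) * ((Real.log (∏ i, r i ^ c i)) ^ 2)⁻¹)
      (Set.univ.pi fun _ : Fin n => Set.Ioo (0 : ℝ) δ) volume
    ↔ ((∀ i, -1 ≤ lam i) ∧ (∀ i, lam i = -1 → 0 < c i) ∧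
        ∀ i j, lam i = -1 → lam j = -1 → i = j) :=
  log_weighted_monomial_integrability_criterion_general n δ hδ0 hδ1 lam c hc hcpos
end

section
/- Let n ≥ 1 be an integer, δ ∈ (0,1), μ₁,…,μ_n ∈ ℝ, and c₁,…,c_n ≥ 0 real numbers with c_j > 0 for at least one j. Let P_δ = {w ∈ ℂⁿ : |w_i| < δ for all i} be the polydisk of radius δ. Then ∫_{P_δ} (∏_{i=1}^n |w_i|^{2μ_i}) · (log(∏_{i=1}^n |w_i|^{c_i}))^{−2} dλ_{2n}(w) < +∞ if and only if the following three conditions hold: (a) μ_i ≥ −1 for every i; (b) whenever μ_i = −1 one has c_i > 0; and (c) there is at most one index i with μ_i = −1. -/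
/-!
Under `w ↦ (‖wᵢ‖²)ᵢ`, Lebesgue measure on `ℂⁿ` is carried to `πⁿ` times Lebesgue measure on
`(0, ∞)ⁿ` (polar coordinates in each factor), and the integrand becomes
`∏ xᵢ ^ μᵢ · (log ∏ xᵢ ^ (cᵢ / 2))⁻²`. So it suffices to prove the same criterion for the cube
`(0, ε)ⁿ ⊆ ℝⁿ`, `ε = δ²`. There, with `tᵢ = -log xᵢ > 0`, the logarithmic factor is
`(∑ cᵢ tᵢ)⁻²`.

If the conditions hold, pick `k` with `c_k > 0` and `μᵢ > -1` for `i ≠ k` (the index with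
`μ_k = -1`, if there is one). Then `(∑ cᵢ tᵢ)⁻² ≤ (c_k t_k)⁻²`, so the integrand is dominated by
a product of the integrable one-variable functions `x ^ μ_k / (c_k log x)²` and `x ^ μᵢ`.

Conversely, if `μ_k < -1`, or `μ_k = -1` and `c_k = 0`, then on the box where every other
coordinate lies in `(ε / 2, ε)` the integrand is at least a constant times `1 / x_k`, which is not
integrable at `0`. If `μ_k = μ_l = -1` with `k ≠ l`, the boxes where `x_k` and `x_l` lie in
`(ε ^ 2 ^ (j + 1), ε ^ 2 ^ j)` are disjoint, and each carries a mass bounded below independently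
of `j`: there `(∑ cᵢ tᵢ)²` is of order `4 ^ j`, while `∫∫ dx_k dx_l / (x_k x_l) = (2 ^ j log ε)²`.
-/

open MeasureTheory Real Set
open scoped ENNReal NNReal

theorem lintegral_fin_nat_prod_eq_prod {n : ℕ} {E : Type*} [MeasurableSpace E]
    (μ : Fin n → Measure E) [∀ i, SigmaFinite (μ i)] {f : Fin n → E → ℝ≥0∞}
    (hf : ∀ i, Measurable (f i)) :
    ∫⁻ x, ∏ i, f i (x i) ∂Measure.pi μ = ∏ i, ∫⁻ y, f i y ∂μ i := by
  induction n with
  | zero => simp [Measure.pi_empty_univ]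
  | succ n ih =>
    rw [← ((measurePreserving_piFinSuccAbove μ 0).symm).lintegral_comp_emb
      (MeasurableEquiv.measurableEmbedding _)]
    simp_rw [MeasurableEquiv.piFinSuccAbove_symm_apply, Fin.insertNthEquiv,
      Fin.prod_univ_succ, Fin.insertNth_zero]
    simp only [Fin.zero_succAbove, Equiv.coe_fn_mk, Fin.cons_zero, Fin.cons_succ, cast_eq]
    rw [lintegral_prod_mul (f := f 0) (g := fun y : Fin n → E => ∏ j, f j.succ (y j))
      (hf 0).aemeasurable
      (Finset.measurable_prod _ fun j _ => (hf j.succ).comp (measurable_pi_apply j)).aemeasurable,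
      ih _ fun j => hf j.succ]

theorem setLIntegral_univ_pi_prod_eq_prod {n : ℕ} {E : Type*} [MeasurableSpace E]
    (μ : Fin n → Measure E) [∀ i, SigmaFinite (μ i)] (I : Fin n → Set E)
    {f : Fin n → E → ℝ≥0∞} (hf : ∀ i, Measurable (f i)) :
    ∫⁻ x in univ.pi I, ∏ i, f i (x i) ∂Measure.pi μ = ∏ i, ∫⁻ y in I i, f i y ∂μ i := by
  rw [Measure.restrict_pi_pi]
  exact lintegral_fin_nat_prod_eq_prod _ hf

theorem MeasureTheory.Measure.pi_const_smul {ι : Type*} [Fintype ι] {E : Type*}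
    [MeasurableSpace E] (c : ℝ≥0) (μ : Measure E) [SigmaFinite μ] :
    Measure.pi (fun _ : ι => c • μ) = c ^ Fintype.card ι • Measure.pi fun _ => μ := by
  refine Measure.pi_eq fun s hs => ?_
  rw [Measure.smul_apply, Measure.pi_pi, ENNReal.smul_def, smul_eq_mul]
  simp [Finset.prod_mul_distrib]

theorem setLIntegral_Ioo_ofReal_ne_zero {f : ℝ → ℝ} (hf : Measurable f) {a b : ℝ} (hab : a < b)
    (hpos : ∀ x ∈ Ioo a b, 0 < f x) : ∫⁻ x in Ioo a b, ENNReal.ofReal (f x) ≠ 0 := by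
  rw [← pos_iff_ne_zero, setLIntegral_pos_iff hf.ennreal_ofReal]
  refine lt_of_lt_of_le ?_ (measure_mono fun x hx => ⟨(ENNReal.ofReal_pos.2 (hpos x hx)).ne', hx⟩)
  simpa using hab

theorem Complex.lintegral_comp_norm_sq {g : ℝ → ℝ≥0∞} (hg : Measurable g) :
    ∫⁻ z : ℂ, g (‖z‖ ^ 2) = ENNReal.ofReal π * ∫⁻ x in Ioi 0, g x := by
  have hsq : (fun r : ℝ => r ^ 2) '' Ioi 0 = Ioi 0 := by
    ext x
    refine ⟨?_, fun hx => ⟨√x, sqrt_pos.2 hx, sq_sqrt (le_of_lt hx)⟩⟩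
    rintro ⟨r, hr, rfl⟩
    exact pow_pos (mem_Ioi.1 hr) 2
  have hsubst : ∫⁻ x in Ioi 0, g x = ∫⁻ r in Ioi 0, ENNReal.ofReal (2 * r) * g (r ^ 2) := by
    conv_lhs => rw [← hsq]
    rw [lintegral_image_eq_lintegral_abs_deriv_mul measurableSet_Ioi
      (fun r _ => (hasDerivAt_pow 2 r).hasDerivWithinAt)
      ((pow_left_strictMonoOn₀ two_ne_zero).injOn.mono Ioi_subset_Ici_self)]
    refine setLIntegral_congr_fun measurableSet_Ioi fun r (hr : 0 < r) => ?_
    simp [abs_of_pos hr]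
  rw [← Complex.lintegral_comp_polarCoord_symm, polarCoord_target,
    Measure.volume_eq_prod, ← Measure.prod_restrict]
  simp_rw [Complex.norm_polarCoord_symm, sq_abs, smul_eq_mul]
  rw [lintegral_prod _ (by fun_prop), hsubst, ← lintegral_const_mul _ (by fun_prop)]
  simp only [lintegral_const, Measure.restrict_apply_univ, Real.volume_Ioo]
  refine setLIntegral_congr_fun measurableSet_Ioi fun r (hr : 0 < r) => ?_
  rw [← mul_assoc, mul_right_comm, ← ENNReal.ofReal_mul pi_pos.le, ← ENNReal.ofReal_mul hr.le]
  congr 2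
  ring

theorem Complex.map_norm_sq_volume :
    volume.map (fun z : ℂ => ‖z‖ ^ 2) = NNReal.pi • volume.restrict (Ioi (0 : ℝ)) := by
  ext s hs
  rw [← lintegral_indicator_one hs, ← lintegral_indicator_one hs,
    lintegral_map (measurable_one.indicator hs) (by fun_prop),
    Complex.lintegral_comp_norm_sq (measurable_one.indicator hs), lintegral_smul_measure,
    ← NNReal.coe_real_pi, ENNReal.ofReal_coe_nnreal]
  rfl

theorem integrableOn_comp_pi_norm_sq_iff {n : ℕ} {F : (Fin n → ℝ) → ℝ} (hF : Measurable F)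
    {s : Set (Fin n → ℝ)} (hs : MeasurableSet s) :
    IntegrableOn (fun w : Fin n → ℂ => F fun i => ‖w i‖ ^ 2) ((fun w i => ‖w i‖ ^ 2) ⁻¹' s) ↔
      IntegrableOn F (s ∩ univ.pi fun _ => Ioi 0) := by
  have hΨ : MeasurePreserving (fun (w : Fin n → ℂ) i => ‖w i‖ ^ 2) volume
      (Measure.pi fun _ => NNReal.pi • volume.restrict (Ioi (0 : ℝ))) := by
    rw [volume_pi]
    exact measurePreserving_pi _ _ fun _ => ⟨by fun_prop, Complex.map_norm_sq_volume⟩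
  rw [IntegrableOn, show (fun w : Fin n → ℂ => F fun i => ‖w i‖ ^ 2) =
    F ∘ fun w i => ‖w i‖ ^ 2 from rfl, ← integrable_map_measure hF.aestronglyMeasurable
    hΨ.measurable.aemeasurable, ← Measure.restrict_map hΨ.measurable hs, hΨ.map_eq,
    Measure.pi_const_smul, Measure.restrict_smul, ENNReal.smul_def,
    integrable_smul_measure (by simp [NNReal.pi_ne_zero]) (by simp),
    ← Measure.restrict_pi_pi, ← volume_pi, Measure.restrict_restrict hs]
  rfl

theorem lintegral_Ioo_inv {a b : ℝ} (ha : 0 < a) (hab : a ≤ b) :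
    ∫⁻ x in Ioo a b, ENNReal.ofReal x⁻¹ = ENNReal.ofReal (log b - log a) := by
  rw [← ofReal_integral_eq_lintegral_ofReal, ← integral_Ioc_eq_integral_Ioo,
    ← intervalIntegral.integral_of_le hab, integral_inv_of_pos ha (ha.trans_le hab),
    log_div (ha.trans_le hab).ne' ha.ne']
  · exact ((continuousOn_inv₀.mono fun x hx => (ha.trans_le hx.1).ne').integrableOn_Icc).mono_set
      Ioo_subset_Icc_self
  · filter_upwards [ae_restrict_mem measurableSet_Ioo] with x hx
    exact inv_nonneg.2 (ha.trans hx.1).le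

theorem lintegral_Ioo_zero_inv_eq_top {ε : ℝ} (hε : 0 < ε) :
    ∫⁻ x in Ioo 0 ε, ENNReal.ofReal x⁻¹ = ⊤ := by
  have h := (intervalIntegral.integrableOn_Ioo_rpow_iff (s := -1) hε).not.2 (lt_irrefl _)
  simp_rw [rpow_neg_one] at h
  by_contra hne
  refine h ((lintegral_ofReal_ne_top_iff_integrable (by fun_prop) ?_).1 hne)
  filter_upwards [ae_restrict_mem measurableSet_Ioo] with x hx
  exact inv_nonneg.2 hx.1.le

theorem lintegral_Ioo_pow_two_pow_inv {ε : ℝ} (hε0 : 0 < ε) (hε1 : ε ≤ 1) (j : ℕ) :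
    ∫⁻ x in Ioo (ε ^ 2 ^ (j + 1)) (ε ^ 2 ^ j), ENNReal.ofReal x⁻¹ =
      ENNReal.ofReal (2 ^ j * -log ε) := by
  rw [lintegral_Ioo_inv (pow_pos hε0 _)
    (pow_le_pow_of_le_one hε0.le hε1 (Nat.pow_le_pow_right two_pos j.le_succ)), log_pow, log_pow]
  congr 1
  push_cast
  rw [pow_succ]
  ring

theorem pairwise_disjoint_Ioo_pow_two_pow {ε : ℝ} (hε0 : 0 ≤ ε) (hε1 : ε ≤ 1) :
    Pairwise (Function.onFun Disjoint fun j : ℕ => Ioo (ε ^ 2 ^ (j + 1)) (ε ^ 2 ^ j)) := by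
  refine (pairwise_disjoint_on _).2 fun j j' hjj' => Set.disjoint_left.2 fun x hx hx' => ?_
  exact lt_irrefl x (hx'.2.trans (lt_of_le_of_lt
    (pow_le_pow_of_le_one hε0 hε1 (Nat.pow_le_pow_right two_pos hjj')) hx.1))

theorem integrableOn_inv_mul_inv_log_sq {ε : ℝ} (hε : ε < 1) :
    IntegrableOn (fun x => x⁻¹ * (log x ^ 2)⁻¹) (Ioo 0 ε) := by
  -- `-(log x)⁻¹` is a primitive, continuous at `0` because `log 0 = 0` and `0⁻¹ = 0` in Lean.
  have hcont0 : ContinuousAt (fun x => -(log x)⁻¹) 0 := by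
    rw [← continuousWithinAt_compl_self, ContinuousWithinAt, log_zero, inv_zero, neg_zero]
    simpa using (tendsto_inv_atBot_zero.comp tendsto_log_nhdsNE_zero).neg
  refine (intervalIntegral.integrableOn_deriv_of_nonneg (g := fun x => -(log x)⁻¹)
    (fun x hx => ?_) (fun x hx => ?_) (fun x hx => ?_)).mono_set Ioo_subset_Ioc_self
  · rcases hx.1.eq_or_lt with rfl | hx0
    · exact hcont0.continuousWithinAt
    · exact ((continuousAt_log hx0.ne').inv₀
        (log_neg hx0 (hx.2.trans_lt hε)).ne).neg.continuousWithinAt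
  · exact ((hasDerivAt_log hx.1.ne').inv (log_neg hx.1 (hx.2.trans hε)).ne).neg.congr_deriv
      (by ring)
  · exact mul_nonneg (inv_nonneg.2 hx.1.le) (by positivity)

theorem integrableOn_rpow_mul_inv_log_sq {ε μ : ℝ} (hε : ε < 1) (hμ : -1 ≤ μ) (c : ℝ) :
    IntegrableOn (fun x => x ^ μ * ((c * log x) ^ 2)⁻¹) (Ioo 0 ε) := by
  refine ((integrableOn_inv_mul_inv_log_sq hε).const_mul (c ^ 2)⁻¹).mono' (by fun_prop)
    ((ae_restrict_iff' measurableSet_Ioo).2 (ae_of_all _ fun x hx => ?_))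
  have hxμ : x ^ μ ≤ x⁻¹ := by
    simpa [rpow_neg_one] using rpow_le_rpow_of_exponent_ge hx.1 (hx.2.trans hε).le hμ
  rw [Real.norm_of_nonneg (mul_nonneg (rpow_nonneg hx.1.le μ) (by positivity)), mul_pow, mul_inv,
    mul_left_comm]
  exact mul_le_mul_of_nonneg_left (mul_le_mul_of_nonneg_right hxμ (by positivity)) (by positivity)

theorem exists_inv_le_rpow_mul_inv_sq {μ c C : ℝ} (hc : 0 ≤ c) (hC : 0 < C)
    (hμ : μ < -1 ∨ μ = -1 ∧ c = 0) :
    ∃ η > 0, ∀ x ∈ Ioc (0 : ℝ) 1, η * x⁻¹ ≤ x ^ μ * ((c * -log x + C) ^ 2)⁻¹ := by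
  rcases hμ with hμ | ⟨rfl, rfl⟩
  · obtain ⟨β, hβ, rfl⟩ : ∃ β > 0, μ = -1 - β := ⟨-1 - μ, by linarith, by ring⟩
    -- With `t = -log x`, `κ = β / (2c + βC)` is chosen so that
    -- `κ (ct + C) ≤ 1 + βt/2 ≤ exp (βt/2) = x ^ (-β/2)`.
    refine ⟨(β / (2 * c + β * C)) ^ 2, by positivity, fun x hx => ?_⟩
    have ht : 0 ≤ -log x := neg_nonneg.2 (log_nonpos hx.1.le hx.2)
    have hκ : β / (2 * c + β * C) * (c * -log x + C) ≤ 1 + β * -log x / 2 := by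
      rw [div_mul_eq_mul_div, div_le_iff₀ (by positivity)]
      nlinarith [mul_nonneg hc ht, mul_nonneg (mul_nonneg hβ.le hβ.le) (mul_nonneg hC.le ht)]
    have hexp : (β / (2 * c + β * C) * (c * -log x + C)) ^ 2 ≤ (x ^ β)⁻¹ :=
      calc _ ≤ (1 + β * -log x / 2) ^ 2 := pow_le_pow_left₀ (by positivity) hκ 2
        _ ≤ exp (β * -log x / 2) ^ 2 :=
          pow_le_pow_left₀ (by positivity) (by linarith [add_one_le_exp (β * -log x / 2)]) 2
        _ = (x ^ β)⁻¹ := by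
          rw [← exp_nat_mul, ← rpow_neg hx.1.le, rpow_def_of_pos hx.1]
          push_cast
          ring_nf
    have hη : (β / (2 * c + β * C)) ^ 2 ≤ (x ^ β)⁻¹ * ((c * -log x + C) ^ 2)⁻¹ := by
      rw [← div_eq_mul_inv, le_div_iff₀ (by positivity), ← mul_pow]
      exact hexp
    calc _ ≤ (x ^ β)⁻¹ * ((c * -log x + C) ^ 2)⁻¹ * x⁻¹ :=
          mul_le_mul_of_nonneg_right hη (inv_nonneg.2 hx.1.le)
      _ = _ := by rw [rpow_sub hx.1, rpow_neg_one]; ring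
  · refine ⟨(C ^ 2)⁻¹, by positivity, fun x hx => ?_⟩
    simp [rpow_neg_one, mul_comm]

noncomputable def logWeightedMonomial {n : ℕ} (μ c : Fin n → ℝ) (x : Fin n → ℝ) : ℝ :=
  (∏ i, x i ^ μ i) * (log (∏ i, x i ^ c i) ^ 2)⁻¹

section logWeightedMonomial

variable {n : ℕ} {μ c : Fin n → ℝ}

theorem measurable_logWeightedMonomial : Measurable (logWeightedMonomial μ c) := by
  unfold logWeightedMonomial
  fun_prop

theorem logWeightedMonomial_nonneg {x : Fin n → ℝ} (hx : ∀ i, 0 ≤ x i) :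
    0 ≤ logWeightedMonomial μ c x :=
  mul_nonneg (Finset.prod_nonneg fun i _ => rpow_nonneg (hx i) _) (by positivity)

theorem logWeightedMonomial_eq {x : Fin n → ℝ} (hx : ∀ i, 0 < x i) :
    logWeightedMonomial μ c x = (∏ i, x i ^ μ i) * ((∑ i, c i * -log (x i)) ^ 2)⁻¹ := by
  rw [logWeightedMonomial, log_prod fun i _ => (rpow_pos_of_pos (hx i) _).ne',
    Finset.sum_congr rfl fun i _ => log_rpow (hx i) (c i)]
  simp only [mul_neg, Finset.sum_neg_distrib, neg_sq]

theorem sum_mul_neg_log_pos (hc : ∀ i, 0 ≤ c i) (hcpos : ∃ j, 0 < c j) {x : Fin n → ℝ}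
    (hx : ∀ i, x i ∈ Ioo 0 1) : 0 < ∑ i, c i * -log (x i) := by
  obtain ⟨j, hj⟩ := hcpos
  exact Finset.sum_pos'
    (fun i _ => mul_nonneg (hc i) (neg_nonneg.2 (log_nonpos (hx i).1.le (hx i).2.le)))
    ⟨j, Finset.mem_univ j, mul_pos hj (neg_pos.2 (log_neg (hx j).1 (hx j).2))⟩

theorem logWeightedMonomial_le (hc : ∀ i, 0 ≤ c i) {k : Fin n} (hk : 0 < c k) {x : Fin n → ℝ}
    (hx : ∀ i, x i ∈ Ioo 0 1) :
    logWeightedMonomial μ c x ≤ (∏ i, x i ^ μ i) * ((c k * log (x k)) ^ 2)⁻¹ := by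
  have hlog : c k * log (x k) < 0 := mul_neg_of_pos_of_neg hk (log_neg (hx k).1 (hx k).2)
  rw [logWeightedMonomial_eq fun i => (hx i).1]
  refine mul_le_mul_of_nonneg_left (inv_anti₀ (sq_pos_of_neg hlog) ?_)
    (Finset.prod_nonneg fun i _ => rpow_nonneg (hx i).1.le _)
  rw [← neg_sq, ← mul_neg]
  exact pow_le_pow_left₀ (by linarith) (Finset.single_le_sum (fun i _ =>
    mul_nonneg (hc i) (neg_nonneg.2 (log_nonpos (hx i).1.le (hx i).2.le))) (Finset.mem_univ k)) 2

theorem mul_inv_sq_le_logWeightedMonomial (hc : ∀ i, 0 ≤ c i) (hcpos : ∃ j, 0 < c j)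
    {x : Fin n → ℝ} (hx : ∀ i, x i ∈ Ioo 0 1) {B : ℝ} (hB : ∑ i, c i * -log (x i) ≤ B) :
    (∏ i, x i ^ μ i) * (B ^ 2)⁻¹ ≤ logWeightedMonomial μ c x := by
  have hpos := sum_mul_neg_log_pos hc hcpos hx
  rw [logWeightedMonomial_eq fun i => (hx i).1]
  exact mul_le_mul_of_nonneg_left (inv_anti₀ (by positivity) (pow_le_pow_left₀ hpos.le hB 2))
    (Finset.prod_nonneg fun i _ => rpow_nonneg (hx i).1.le _)

theorem exists_pos_and_forall_ne_neg_one_lt (hcpos : ∃ j, 0 < c j) (h1 : ∀ i, -1 ≤ μ i)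
    (h2 : ∀ i, μ i = -1 → 0 < c i) (h3 : ∀ i j, μ i = -1 → μ j = -1 → i = j) :
    ∃ k, 0 < c k ∧ ∀ i ≠ k, -1 < μ i := by
  by_cases h : ∃ k, μ k = -1
  · obtain ⟨k, hk⟩ := h
    exact ⟨k, h2 k hk, fun i hi => (h1 i).lt_of_ne fun h => hi (h3 i k h.symm hk)⟩
  · push Not at h
    obtain ⟨j, hj⟩ := hcpos
    exact ⟨j, hj, fun i _ => (h1 i).lt_of_ne (h i).symm⟩

theorem integrableOn_logWeightedMonomial {ε : ℝ} (hε0 : 0 < ε) (hε1 : ε < 1)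
    (hc : ∀ i, 0 ≤ c i) (hcpos : ∃ j, 0 < c j) (h1 : ∀ i, -1 ≤ μ i)
    (h2 : ∀ i, μ i = -1 → 0 < c i) (h3 : ∀ i j, μ i = -1 → μ j = -1 → i = j) :
    IntegrableOn (logWeightedMonomial μ c) (univ.pi fun _ => Ioo 0 ε) := by
  obtain ⟨k, hk, hother⟩ := exists_pos_and_forall_ne_neg_one_lt hcpos h1 h2 h3
  set g : Fin n → ℝ → ℝ := fun i y => y ^ μ i * if i = k then ((c k * log y) ^ 2)⁻¹ else 1
  have hg : ∀ i, IntegrableOn (g i) (Ioo 0 ε) := by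
    intro i
    by_cases hi : i = k
    · subst hi
      simpa [g] using integrableOn_rpow_mul_inv_log_sq hε1 (h1 i) (c i)
    · simpa [g, hi] using (intervalIntegral.integrableOn_Ioo_rpow_iff hε0).2 (hother i hi)
  have hprod : IntegrableOn (fun x : Fin n → ℝ => ∏ i, g i (x i)) (univ.pi fun _ => Ioo 0 ε) := by
    rw [IntegrableOn, volume_pi, Measure.restrict_pi_pi]
    exact Integrable.fintype_prod hg
  refine hprod.mono' measurable_logWeightedMonomial.aestronglyMeasurable
    ((ae_restrict_iff' (MeasurableSet.univ_pi fun _ => measurableSet_Ioo)).2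
      (ae_of_all _ fun x hx => ?_))
  have hx' : ∀ i, x i ∈ Ioo 0 1 := fun i => ⟨(hx i trivial).1, (hx i trivial).2.trans hε1⟩
  rw [Real.norm_of_nonneg (logWeightedMonomial_nonneg fun i => (hx' i).1.le)]
  convert logWeightedMonomial_le hc hk hx' using 1
  simp only [g, Finset.prod_mul_distrib, Finset.prod_ite_eq', Finset.mem_univ, if_true]

theorem sum_mul_neg_log_le_add (hc : ∀ i, 0 ≤ c i) {k : Fin n} {a : ℝ} (ha0 : 0 < a)
    (ha1 : a ≤ 1) {x : Fin n → ℝ} (hx : ∀ i ≠ k, a < x i) :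
    ∑ i, c i * -log (x i) ≤ c k * -log (x k) + (∑ i, c i) * -log a := by
  rw [← Finset.add_sum_erase _ _ (Finset.mem_univ k), Finset.sum_mul]
  refine add_le_add_right ((Finset.sum_le_sum fun i hi => ?_).trans
    (Finset.sum_le_sum_of_subset_of_nonneg (Finset.erase_subset k _) fun i _ _ =>
      mul_nonneg (hc i) (neg_nonneg.2 (log_nonpos ha0.le ha1)))) _
  exact mul_le_mul_of_nonneg_left
    (neg_le_neg (log_le_log ha0 (hx i (Finset.ne_of_mem_erase hi)).le)) (hc i)

theorem mul_prod_erase_le_logWeightedMonomial (hc : ∀ i, 0 ≤ c i) (hcpos : ∃ j, 0 < c j)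
    {k : Fin n} {a η : ℝ} (ha0 : 0 < a) (ha1 : a ≤ 1)
    (hη : ∀ y ∈ Ioc (0 : ℝ) 1, η * y⁻¹ ≤ y ^ μ k * ((c k * -log y + (∑ i, c i) * -log a) ^ 2)⁻¹)
    {x : Fin n → ℝ} (hx : ∀ i, x i ∈ Ioo 0 1) (hxa : ∀ i ≠ k, a < x i) :
    η * (x k)⁻¹ * ∏ i ∈ Finset.univ.erase k, x i ^ μ i ≤ logWeightedMonomial μ c x := by
  refine le_trans ?_
    (mul_inv_sq_le_logWeightedMonomial hc hcpos hx (sum_mul_neg_log_le_add hc ha0 ha1 hxa))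
  rw [← Finset.mul_prod_erase _ _ (Finset.mem_univ k)]
  convert mul_le_mul_of_nonneg_right (hη _ ⟨(hx k).1, (hx k).2.le⟩)
    (Finset.prod_nonneg (s := Finset.univ.erase k) fun i _ => rpow_nonneg (hx i).1.le (μ i))
    using 1
  ring

theorem prod_setLIntegral_inv_or_rpow_eq_top {ε a η : ℝ} (hε0 : 0 < ε) (ha0 : 0 < a)
    (haε : a < ε) (hη : 0 < η) (k : Fin n) :
    ∏ i, ∫⁻ y in Ioo (if i = k then 0 else a) ε,
      ENNReal.ofReal (if i = k then η * y⁻¹ else y ^ μ i) = ⊤ := by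
  refine WithTop.prod_eq_top (Finset.mem_univ k) ?_ fun i _ => ?_
  · simp only [if_pos, ENNReal.ofReal_mul hη.le]
    rw [lintegral_const_mul _ (by fun_prop), lintegral_Ioo_zero_inv_eq_top hε0,
      ENNReal.mul_top (ENNReal.ofReal_pos.2 hη).ne']
    rfl
  · split_ifs
    · exact setLIntegral_Ioo_ofReal_ne_zero (by fun_prop) hε0 fun y hy =>
        mul_pos hη (inv_pos.2 hy.1)
    · exact setLIntegral_Ioo_ofReal_ne_zero (by fun_prop) haε fun y hy =>
        rpow_pos_of_pos (ha0.trans hy.1) _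

theorem setLIntegral_logWeightedMonomial_eq_top_of_single {ε : ℝ} (hε0 : 0 < ε) (hε1 : ε < 1)
    (hc : ∀ i, 0 ≤ c i) (hcpos : ∃ j, 0 < c j) {k : Fin n}
    (hk : μ k < -1 ∨ μ k = -1 ∧ c k = 0) :
    ∫⁻ x in univ.pi fun _ => Ioo 0 ε, ENNReal.ofReal (logWeightedMonomial μ c x) = ⊤ := by
  have hT : 0 < -log (ε / 2) := neg_pos.2 (log_neg (by positivity) (by linarith))
  obtain ⟨j, hj⟩ := hcpos
  obtain ⟨η, hη, hηle⟩ := exists_inv_le_rpow_mul_inv_sq (hc k)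
    (mul_pos (Finset.sum_pos' (fun i _ => hc i) ⟨j, Finset.mem_univ j, hj⟩) hT) hk
  set I : Fin n → Set ℝ := fun i => Ioo (if i = k then 0 else ε / 2) ε
  set g : Fin n → ℝ → ℝ := fun i y => if i = k then η * y⁻¹ else y ^ μ i
  have hIpos : ∀ i, ∀ y ∈ I i, 0 < y := fun i y hy =>
    lt_of_le_of_lt (by split_ifs <;> positivity) hy.1
  have hle : ∀ x ∈ univ.pi I, ∏ i, ENNReal.ofReal (g i (x i)) ≤
      ENNReal.ofReal (logWeightedMonomial μ c x) := by
    intro x hx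
    have hx' : ∀ i, x i ∈ Ioo 0 1 := fun i => ⟨hIpos i _ (hx i trivial), (hx i trivial).2.trans hε1⟩
    rw [← ENNReal.ofReal_prod_of_nonneg fun i _ => by
        simp only [g]; split_ifs <;> positivity [(hx' i).1],
      ← Finset.mul_prod_erase _ _ (Finset.mem_univ k),
      Finset.prod_congr rfl fun i hi => if_neg (Finset.ne_of_mem_erase hi)]
    refine ENNReal.ofReal_le_ofReal (le_of_eq_of_le (by simp [g])
      (mul_prod_erase_le_logWeightedMonomial hc ⟨j, hj⟩ (by positivity) (by linarith) hηle hx'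
        fun i hi => by simpa [I, hi] using (hx i trivial).1))
  refine top_unique ?_
  calc ⊤ = ∫⁻ x in univ.pi I, ∏ i, ENNReal.ofReal (g i (x i)) := by
        rw [volume_pi, setLIntegral_univ_pi_prod_eq_prod _ _
          (f := fun i y => ENNReal.ofReal (g i y)) fun i => by
            simp only [g]; split_ifs <;> fun_prop]
        exact (prod_setLIntegral_inv_or_rpow_eq_top hε0 (by positivity) (by linarith) hη k).symm
    _ ≤ ∫⁻ x in univ.pi I, ENNReal.ofReal (logWeightedMonomial μ c x) :=
        setLIntegral_mono measurable_logWeightedMonomial.ennreal_ofReal hle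
    _ ≤ _ := lintegral_mono_set (pi_mono fun i _ =>
        Ioo_subset_Ioo_left (by split_ifs <;> positivity))

theorem ofReal_mul_prod_le_setLIntegral_logWeightedMonomial (hc : ∀ i, 0 ≤ c i)
    (hcpos : ∃ j, 0 < c j) {I : Fin n → Set ℝ} (hI : ∀ i, I i ⊆ Ioo 0 1) {B : ℝ}
    (hB : ∀ x ∈ univ.pi I, ∑ i, c i * -log (x i) ≤ B) :
    ENNReal.ofReal (B ^ 2)⁻¹ * ∏ i, ∫⁻ y in I i, ENNReal.ofReal (y ^ μ i) ≤
      ∫⁻ x in univ.pi I, ENNReal.ofReal (logWeightedMonomial μ c x) := by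
  rw [← setLIntegral_univ_pi_prod_eq_prod (fun _ => volume) I
    (f := fun i y => ENNReal.ofReal (y ^ μ i)) fun i => by fun_prop, ← volume_pi,
    ← lintegral_const_mul _ (Finset.measurable_prod _ fun i _ => by fun_prop)]
  refine setLIntegral_mono measurable_logWeightedMonomial.ennreal_ofReal fun x hx => ?_
  have hx' : ∀ i, x i ∈ Ioo 0 1 := fun i => hI i (hx i trivial)
  rw [← ENNReal.ofReal_prod_of_nonneg fun i _ => rpow_nonneg (hx' i).1.le _,
    ← ENNReal.ofReal_mul (by positivity), mul_comm]
  exact ENNReal.ofReal_le_ofReal (mul_inv_sq_le_logWeightedMonomial hc hcpos hx' (hB x hx))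

def pairBox (ε : ℝ) (k l : Fin n) (j : ℕ) (i : Fin n) : Set ℝ :=
  if i = k ∨ i = l then Ioo (ε ^ 2 ^ (j + 1)) (ε ^ 2 ^ j) else Ioo (ε / 2) ε

theorem pairBox_subset {ε : ℝ} (hε0 : 0 < ε) (hε1 : ε ≤ 1) (k l : Fin n) (j : ℕ) (i : Fin n) :
    pairBox ε k l j i ⊆ Ioo 0 ε := by
  unfold pairBox
  split_ifs
  · exact fun x hx => ⟨(pow_pos hε0 _).trans hx.1,
      hx.2.trans_le (pow_le_of_le_one hε0.le hε1 (by positivity))⟩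
  · exact Ioo_subset_Ioo_left (by positivity)

theorem neg_log_le_of_mem_pairBox {ε : ℝ} (hε0 : 0 < ε) (hε1 : ε < 1) {k l : Fin n} {j : ℕ}
    {i : Fin n} {x : ℝ} (hx : x ∈ pairBox ε k l j i) : -log x ≤ 2 ^ (j + 1) * -log (ε / 2) := by
  have hlog2 : -log ε ≤ -log (ε / 2) := neg_le_neg (log_le_log (by positivity) (by linarith))
  have hε2 : 0 ≤ -log ε := neg_nonneg.2 (log_nonpos hε0.le hε1.le)
  unfold pairBox at hx
  split_ifs at hx
  · have := log_le_log (pow_pos hε0 _) hx.1.le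
    rw [log_pow] at this
    push_cast at this
    nlinarith [pow_pos (two_pos (α := ℝ)) (j + 1)]
  · have := log_le_log (by positivity) hx.1.le
    nlinarith [one_le_pow₀ (one_le_two (α := ℝ)) (n := j + 1)]

theorem prod_setLIntegral_pairBox {ε : ℝ} (hε0 : 0 < ε) (hε1 : ε ≤ 1) {k l : Fin n} (hkl : k ≠ l)
    (hk : μ k = -1) (hl : μ l = -1) (j : ℕ) :
    ∏ i, ∫⁻ y in pairBox ε k l j i, ENNReal.ofReal (y ^ μ i) =
      ENNReal.ofReal (2 ^ j * -log ε) ^ 2 * ∏ i ∈ Finset.univ.filter (fun i => ¬(i = k ∨ i = l)),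
        ∫⁻ y in Ioo (ε / 2) ε, ENNReal.ofReal (y ^ μ i) := by
  have hfactor : ∀ i, ∫⁻ y in pairBox ε k l j i, ENNReal.ofReal (y ^ μ i) =
      if i = k ∨ i = l then ENNReal.ofReal (2 ^ j * -log ε) else
        ∫⁻ y in Ioo (ε / 2) ε, ENNReal.ofReal (y ^ μ i) := fun i => by
    unfold pairBox
    split_ifs with h
    · rw [show μ i = -1 by rcases h with rfl | rfl <;> assumption]
      simp_rw [rpow_neg_one]
      exact lintegral_Ioo_pow_two_pow_inv hε0 hε1 j
    · rfl
  rw [Finset.prod_congr rfl fun i _ => hfactor i, Finset.prod_ite, Finset.prod_const,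
    show Finset.univ.filter (fun i => i = k ∨ i = l) = {k, l} by ext; simp, Finset.card_pair hkl]

theorem ofReal_mul_le_setLIntegral_pairBox {ε : ℝ} (hε0 : 0 < ε) (hε1 : ε < 1)
    (hc : ∀ i, 0 ≤ c i) (hcpos : ∃ j, 0 < c j) {k l : Fin n} (hkl : k ≠ l) (hk : μ k = -1)
    (hl : μ l = -1) (j : ℕ) :
    ENNReal.ofReal ((-log ε / (2 * (∑ i, c i) * -log (ε / 2))) ^ 2) *
        ∏ i ∈ Finset.univ.filter (fun i => ¬(i = k ∨ i = l)),
          ∫⁻ y in Ioo (ε / 2) ε, ENNReal.ofReal (y ^ μ i) ≤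
      ∫⁻ x in univ.pi (pairBox ε k l j), ENNReal.ofReal (logWeightedMonomial μ c x) := by
  refine le_trans (le_of_eq ?_) (ofReal_mul_prod_le_setLIntegral_logWeightedMonomial
    (B := (∑ i, c i) * (2 ^ (j + 1) * -log (ε / 2))) hc hcpos
    (fun i => (pairBox_subset hε0 hε1.le k l j i).trans (Ioo_subset_Ioo_right hε1.le))
    fun x hx => ?_)
  · have hL : 0 ≤ -log ε := neg_nonneg.2 (log_nonpos hε0.le hε1.le)
    rw [prod_setLIntegral_pairBox hε0 hε1.le hkl hk hl, ← ENNReal.ofReal_pow (by positivity),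
      ← mul_assoc, ← ENNReal.ofReal_mul (by positivity)]
    congr 2
    field_simp
    ring
  · rw [Finset.sum_mul]
    exact Finset.sum_le_sum fun i _ =>
      mul_le_mul_of_nonneg_left (neg_log_le_of_mem_pairBox hε0 hε1 (hx i trivial)) (hc i)

theorem setLIntegral_logWeightedMonomial_eq_top_of_pair {ε : ℝ} (hε0 : 0 < ε) (hε1 : ε < 1)
    (hc : ∀ i, 0 ≤ c i) (hcpos : ∃ j, 0 < c j) {k l : Fin n} (hkl : k ≠ l) (hk : μ k = -1)
    (hl : μ l = -1) :
    ∫⁻ x in univ.pi fun _ => Ioo 0 ε, ENNReal.ofReal (logWeightedMonomial μ c x) = ⊤ := by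
  have hL : 0 < -log ε := neg_pos.2 (log_neg hε0 hε1)
  have hLT : -log ε ≤ -log (ε / 2) := neg_le_neg (log_le_log (by positivity) (by linarith))
  obtain ⟨j₀, hj₀⟩ := hcpos
  have hS : 0 < ∑ i, c i := Finset.sum_pos' (fun i _ => hc i) ⟨j₀, Finset.mem_univ _, hj₀⟩
  have hQ : ∏ i ∈ Finset.univ.filter (fun i => ¬(i = k ∨ i = l)),
      ∫⁻ y in Ioo (ε / 2) ε, ENNReal.ofReal (y ^ μ i) ≠ 0 :=
    Finset.prod_ne_zero_iff.2 fun i _ => setLIntegral_Ioo_ofReal_ne_zero (by fun_prop)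
      (by linarith) fun y hy => rpow_pos_of_pos (by linarith [hy.1]) _
  have hdisj : Pairwise (Function.onFun Disjoint fun j => univ.pi (pairBox ε k l j)) :=
    fun j j' hjj' => disjoint_univ_pi.2 ⟨k, by
      simpa [pairBox] using pairwise_disjoint_Ioo_pow_two_pow hε0.le hε1.le hjj'⟩
  refine top_unique ?_
  calc ⊤ = ∑' _ : ℕ, ENNReal.ofReal ((-log ε / (2 * (∑ i, c i) * -log (ε / 2))) ^ 2) *
        ∏ i ∈ Finset.univ.filter (fun i => ¬(i = k ∨ i = l)),
          ∫⁻ y in Ioo (ε / 2) ε, ENNReal.ofReal (y ^ μ i) :=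
        (ENNReal.tsum_const_eq_top_of_ne_zero (mul_ne_zero (ENNReal.ofReal_pos.2
          (pow_pos (div_pos hL (mul_pos (mul_pos two_pos hS) (hL.trans_le hLT))) 2)).ne' hQ)).symm
    _ ≤ ∑' j, ∫⁻ x in univ.pi (pairBox ε k l j), ENNReal.ofReal (logWeightedMonomial μ c x) :=
        ENNReal.tsum_le_tsum (ofReal_mul_le_setLIntegral_pairBox hε0 hε1 hc ⟨j₀, hj₀⟩ hkl hk hl)
    _ = ∫⁻ x in ⋃ j, univ.pi (pairBox ε k l j), ENNReal.ofReal (logWeightedMonomial μ c x) :=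
        (lintegral_iUnion (fun j => MeasurableSet.univ_pi fun i => by
          unfold pairBox; split_ifs <;> exact measurableSet_Ioo) hdisj _).symm
    _ ≤ _ := lintegral_mono_set (iUnion_subset fun j =>
        pi_mono fun i _ => pairBox_subset hε0 hε1.le k l j i)

theorem integrableOn_logWeightedMonomial_iff {ε : ℝ} (hε0 : 0 < ε) (hε1 : ε < 1)
    (hc : ∀ i, 0 ≤ c i) (hcpos : ∃ j, 0 < c j) :
    IntegrableOn (logWeightedMonomial μ c) (univ.pi fun _ => Ioo 0 ε) ↔
      (∀ i, -1 ≤ μ i) ∧ (∀ i, μ i = -1 → 0 < c i) ∧ ∀ i j, μ i = -1 → μ j = -1 → i = j := by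
  refine ⟨fun hint => ?_, fun ⟨h1, h2, h3⟩ =>
    integrableOn_logWeightedMonomial hε0 hε1 hc hcpos h1 h2 h3⟩
  have hfin := hint.lintegral_lt_top.ne
  refine ⟨fun i => ?_, fun i hi => ?_, fun i j hi hj => ?_⟩
  · by_contra h
    exact hfin (setLIntegral_logWeightedMonomial_eq_top_of_single hε0 hε1 hc hcpos
      (Or.inl (not_le.1 h)))
  · by_contra h
    exact hfin (setLIntegral_logWeightedMonomial_eq_top_of_single hε0 hε1 hc hcpos
      (Or.inr ⟨hi, le_antisymm (not_lt.1 h) (hc i)⟩))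
  · by_contra h
    exact hfin (setLIntegral_logWeightedMonomial_eq_top_of_pair hε0 hε1 hc hcpos h hi hj)

end logWeightedMonomial

theorem log_weighted_monomial_integrability_criterion_complex_general
    (n : ℕ) (δ : ℝ) (hδ0 : 0 < δ) (hδ1 : δ < 1)
    (μ c : Fin n → ℝ) (hc : ∀ i, 0 ≤ c i) (hcpos : ∃ j, 0 < c j) :
    IntegrableOn
      (fun w : Fin n → ℂ =>
        (∏ i, ‖w i‖ ^ (2 * μ i)) *
          ((Real.log (∏ i, ‖w i‖ ^ (c i))) ^ 2)⁻¹)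
      {w : Fin n → ℂ | ∀ i, ‖w i‖ < δ} volume
    ↔ ((∀ i, -1 ≤ μ i) ∧ (∀ i, μ i = -1 → 0 < c i) ∧
        ∀ i j, μ i = -1 → μ j = -1 → i = j) := by
  have hpolydisk : {w : Fin n → ℂ | ∀ i, ‖w i‖ < δ} =
      (fun w i => ‖w i‖ ^ 2) ⁻¹' univ.pi fun _ => Iio (δ ^ 2) := by
    ext w
    simp [pow_lt_pow_iff_left₀ (norm_nonneg _) hδ0.le two_ne_zero]
  have hintegrand : (fun w : Fin n → ℂ => (∏ i, ‖w i‖ ^ (2 * μ i)) *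
      ((log (∏ i, ‖w i‖ ^ c i)) ^ 2)⁻¹) =
      fun w => logWeightedMonomial μ (fun i => c i / 2) fun i => ‖w i‖ ^ 2 := by
    funext w
    have hsq : ∀ i (a : ℝ), (‖w i‖ ^ 2) ^ a = ‖w i‖ ^ (2 * a) := fun i a => by
      rw [rpow_mul (norm_nonneg _), rpow_two]
    simp only [logWeightedMonomial, hsq, mul_div_cancel₀ _ (two_ne_zero (α := ℝ))]
  rw [hpolydisk, hintegrand, integrableOn_comp_pi_norm_sq_iff measurable_logWeightedMonomial
    (MeasurableSet.univ_pi fun _ => measurableSet_Iio), ← pi_inter_distrib]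
  simp only [Iio_inter_Ioi]
  rw [integrableOn_logWeightedMonomial_iff (by positivity) (by nlinarith)
    (fun i => by linarith [hc i]) (hcpos.imp fun j hj => by linarith)]
  simp only [div_pos_iff_of_pos_right (two_pos (α := ℝ))]

/-- The complex form of the integrability criterion used in the proof of
Proposition 5.3 of the paper: for `δ ∈ (0,1)`, `μᵢ ∈ ℝ` and `cᵢ ≥ 0` with some
`c_j > 0`, the integral over the polydisk `P_δ ⊂ ℂⁿ` of
`(∏ |wᵢ|^{2μᵢ}) (log ∏ |wᵢ|^{cᵢ})^{-2}` is finite iff (a) every `μᵢ ≥ -1`,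
(b) `μᵢ = -1` forces `cᵢ > 0`, and (c) at most one index has `μᵢ = -1`. -/
theorem log_weighted_monomial_integrability_criterion_complex
    (n : ℕ) (hn : 1 ≤ n) (δ : ℝ) (hδ0 : 0 < δ) (hδ1 : δ < 1)
    (μ c : Fin n → ℝ) (hc : ∀ i, 0 ≤ c i) (hcpos : ∃ j, 0 < c j) :
    IntegrableOn
      (fun w : Fin n → ℂ =>
        (∏ i, ‖w i‖ ^ (2 * μ i)) *
          ((Real.log (∏ i, ‖w i‖ ^ (c i))) ^ 2)⁻¹)
      {w : Fin n → ℂ | ∀ i, ‖w i‖ < δ} volume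
    ↔ ((∀ i, -1 ≤ μ i) ∧ (∀ i, μ i = -1 → 0 < c i) ∧
        ∀ i j, μ i = -1 → μ j = -1 → i = j) :=
  log_weighted_monomial_integrability_criterion_complex_general n δ hδ0 hδ1 μ c hc hcpos
end
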